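/- arXiv:1709.06593 — 12 statements merged into one kernel-verified Lean document; each statement's English description precedes it below -/
import Mathlib

section
/- Fix an integer K ≥ 1 and reals ρ_i > 0 and p ∈ [0,1]. Set ρ_{i,p} = ρ_i·p, a_0 = Σ_{j=0}^{K} ρ_{i,p}^j, and P_B^{PS}(p) = (1−p) + p·ρ_{i,p}^K / a_0. Then 1 − ρ_i·(1 − P_B^{PS}(p)) = 1/a_0. Consequently, for any λ_t > 0 and μ_t > 0 with λ_t·a_0 < μ_t, one has 1/(μ_t·(1 − ρ_i·(1 − P_B^{PS}(p))) − λ_t) = a_0/(μ_t − λ_t·a_0); that is, the PS policies satisfy the pseudo conservation law E_{S_t}(P_B) = 1/(μ_t(1 − ρ_i(1 − P_B)) − λ_t). -/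
/-!
With `x = ρ p`, one has `1 - ρ (1 - P_B) = 1 - x (1 - x^K / a₀)`, and the geometric-sum identity
`(1 - x) a₀ = 1 - x^(K+1)` collapses this to `1 / a₀`; the sojourn-time formula then follows by
clearing denominators.
-/

open Finset

theorem one_sub_mul_one_sub_pow_div_geom_sum {F : Type*} [Field F] (x : F) (n : ℕ)
    (hs : ∑ j ∈ range (n + 1), x ^ j ≠ 0) :
    1 - x * (1 - x ^ n / ∑ j ∈ range (n + 1), x ^ j) = 1 / ∑ j ∈ range (n + 1), x ^ j := by
  field_simp
  linear_combination geom_sum_mul_neg x (n + 1)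

theorem one_div_mul_one_div_sub {F : Type*} [Field F] {a : F} (ha : a ≠ 0) (μ l : F) :
    1 / (μ * (1 / a) - l) = a / (μ - l * a) := by
  rw [mul_one_div, div_sub' ha, one_div_div, mul_comm l a]

theorem ps_pseudo_conservation_general
    (K : ℕ) (ρ p : ℝ) (hρ : 0 < ρ) (hp0 : 0 ≤ p) :
    (1 - ρ * (1 - ((1 - p) + p * (ρ * p) ^ K / (∑ j ∈ Finset.range (K + 1), (ρ * p) ^ j)))
        = 1 / (∑ j ∈ Finset.range (K + 1), (ρ * p) ^ j))
    ∧ ∀ lamt μt : ℝ, 0 < lamt → 0 < μt →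
        lamt * (∑ j ∈ Finset.range (K + 1), (ρ * p) ^ j) < μt →
        1 / (μt * (1 - ρ * (1 - ((1 - p) + p * (ρ * p) ^ K
              / (∑ j ∈ Finset.range (K + 1), (ρ * p) ^ j)))) - lamt)
          = (∑ j ∈ Finset.range (K + 1), (ρ * p) ^ j)
              / (μt - lamt * (∑ j ∈ Finset.range (K + 1), (ρ * p) ^ j)) := by
  have ha : ∑ j ∈ range (K + 1), (ρ * p) ^ j ≠ 0 :=
    (geom_sum_pos (mul_nonneg hρ.le hp0) K.succ_ne_zero).ne'
  have hblocking : 1 - ρ * (1 - ((1 - p) + p * (ρ * p) ^ K / ∑ j ∈ range (K + 1), (ρ * p) ^ j))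
      = 1 / ∑ j ∈ range (K + 1), (ρ * p) ^ j := by
    rw [← one_sub_mul_one_sub_pow_div_geom_sum (ρ * p) K ha]
    ring
  refine ⟨hblocking, fun lamt μt _ _ _ => ?_⟩
  rw [hblocking, one_div_mul_one_div_sub ha]

/-- The PS policies satisfy the pseudo conservation law. -/
theorem ps_pseudo_conservation
    (K : ℕ) (hK : 1 ≤ K) (ρ p : ℝ) (hρ : 0 < ρ) (hp0 : 0 ≤ p) (hp1 : p ≤ 1) :
    (1 - ρ * (1 - ((1 - p) + p * (ρ * p) ^ K / (∑ j ∈ Finset.range (K + 1), (ρ * p) ^ j)))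
        = 1 / (∑ j ∈ Finset.range (K + 1), (ρ * p) ^ j))
    ∧ ∀ lamt μt : ℝ, 0 < lamt → 0 < μt →
        lamt * (∑ j ∈ Finset.range (K + 1), (ρ * p) ^ j) < μt →
        1 / (μt * (1 - ρ * (1 - ((1 - p) + p * (ρ * p) ^ K
              / (∑ j ∈ Finset.range (K + 1), (ρ * p) ^ j)))) - lamt)
          = (∑ j ∈ Finset.range (K + 1), (ρ * p) ^ j)
              / (μt - lamt * (∑ j ∈ Finset.range (K + 1), (ρ * p) ^ j)) :=
  ps_pseudo_conservation_general K ρ p hρ hp0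
end

section
/- Fix an integer K ≥ 1 and ρ_i > 0, and define P_B^{PS}(p) = (1−p) + p·(ρ_i p)^K / (Σ_{j=0}^{K} (ρ_i p)^j) for p ∈ [0,1]. Then P_B^{PS}(1) ≤ P_B^{PS}(p) for every p ∈ [0,1]; that is, full admission yields the smallest blocking probability among all admission probabilities. -/
/-- The blocking probability of the PS policy with admission probability `p`. -/
noncomputable def PBps (K : ℕ) (ρ p : ℝ) : ℝ :=
  (1 - p) + p * (ρ * p) ^ K / ∑ j ∈ Finset.range (K + 1), (ρ * p) ^ j

open Finset

lemma antisym_sum_zero (K : ℕ) (F : ℕ → ℕ → ℝ) (hF : ∀ j i, F j i = -F i j) :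
    ∑ j ∈ range K, ∑ i ∈ range K, F j i = 0 := by
  have h : ∑ j ∈ range K, ∑ i ∈ range K, F j i
      = ∑ i ∈ range K, ∑ j ∈ range K, F j i := Finset.sum_comm
  have h2 : ∑ i ∈ range K, ∑ j ∈ range K, F j i
      = -∑ i ∈ range K, ∑ j ∈ range K, F i j := by
    rw [← Finset.sum_neg_distrib]
    refine Finset.sum_congr rfl fun i _ => ?_
    rw [← Finset.sum_neg_distrib]
    exact Finset.sum_congr rfl fun j _ => hF j i
  linarith

lemma key_ineq (K : ℕ) (ρ p : ℝ) (hρ : 0 ≤ ρ) (hp0 : 0 ≤ p) (hp1 : p ≤ 1) :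
    0 ≤ (∑ j ∈ range K, ρ ^ j) * (∑ k ∈ range (K + 1), (ρ * p) ^ k)
      - p * (∑ j ∈ range K, (ρ * p) ^ j) * (∑ k ∈ range (K + 1), ρ ^ k) := by
  have hD : (∑ j ∈ range K, ρ ^ j) * (∑ k ∈ range (K + 1), (ρ * p) ^ k)
      - p * (∑ j ∈ range K, (ρ * p) ^ j) * (∑ k ∈ range (K + 1), ρ ^ k)
      = ∑ j ∈ range K, ∑ k ∈ range (K + 1),
          (ρ ^ j * (ρ * p) ^ k - p * (ρ * p) ^ j * ρ ^ k) := by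
    rw [Finset.sum_mul_sum, mul_assoc, Finset.sum_mul_sum, Finset.mul_sum,
      ← Finset.sum_sub_distrib]
    refine Finset.sum_congr rfl fun j _ => ?_
    rw [Finset.mul_sum, ← Finset.sum_sub_distrib]
    refine Finset.sum_congr rfl fun k _ => ?_
    ring
  rw [hD]
  have hsplit : ∀ j : ℕ, ∑ k ∈ range (K + 1),
      (ρ ^ j * (ρ * p) ^ k - p * (ρ * p) ^ j * ρ ^ k)
      = (∑ i ∈ range K, (ρ ^ j * (ρ * p) ^ (i + 1) - p * (ρ * p) ^ j * ρ ^ (i + 1)))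
        + (ρ ^ j * (ρ * p) ^ 0 - p * (ρ * p) ^ j * ρ ^ 0) := fun j =>
    Finset.sum_range_succ' _ K
  simp_rw [hsplit]
  rw [Finset.sum_add_distrib]
  have h1 : ∑ j ∈ range K, ∑ i ∈ range K,
      (ρ ^ j * (ρ * p) ^ (i + 1) - p * (ρ * p) ^ j * ρ ^ (i + 1)) = 0 := by
    apply antisym_sum_zero
    intro j i
    simp only [mul_pow, pow_succ]
    ring
  rw [h1, zero_add]
  apply Finset.sum_nonneg
  intro j _
  have hterm : ρ ^ j * (ρ * p) ^ 0 - p * (ρ * p) ^ j * ρ ^ 0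
      = ρ ^ j * (1 - p ^ (j + 1)) := by
    simp only [mul_pow, pow_zero, pow_succ]
    ring
  rw [hterm]
  exact mul_nonneg (pow_nonneg hρ j)
    (sub_nonneg.2 (pow_le_one₀ hp0 hp1))

/-- Full admission yields the smallest blocking probability. -/
theorem ps_blocking_min_at_one (K : ℕ) (hK : 1 ≤ K) (ρ : ℝ) (hρ : 0 < ρ) :
    ∀ p ∈ Set.Icc (0 : ℝ) 1, PBps K ρ 1 ≤ PBps K ρ p := by
  intro p hp
  obtain ⟨hp0, hp1⟩ := hp
  have hρ' : (0 : ℝ) ≤ ρ := hρ.le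
  have hx : (0 : ℝ) ≤ ρ * p := mul_nonneg hρ' hp0
  have hpos : ∀ y : ℝ, 0 ≤ y → 0 < ∑ k ∈ range (K + 1), y ^ k := by
    intro y hy
    have h1 : (1 : ℝ) ≤ ∑ k ∈ range (K + 1), y ^ k := by
      calc (1 : ℝ) = y ^ 0 := (pow_zero y).symm
        _ ≤ ∑ k ∈ range (K + 1), y ^ k :=
          Finset.single_le_sum (fun k _ => pow_nonneg hy k)
            (Finset.mem_range.2 (Nat.succ_pos K))
    linarith
  have hSρ : 0 < ∑ k ∈ range (K + 1), ρ ^ k := hpos ρ hρ'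
  have hSx : 0 < ∑ k ∈ range (K + 1), (ρ * p) ^ k := hpos (ρ * p) hx
  unfold PBps
  simp only [mul_one, one_mul, sub_self, zero_add]
  set A := ∑ j ∈ range K, ρ ^ j with hA
  set C := ∑ j ∈ range K, (ρ * p) ^ j with hC
  set B := ∑ k ∈ range (K + 1), (ρ * p) ^ k with hB
  set D := ∑ k ∈ range (K + 1), ρ ^ k with hDdef
  have hBC : B = C + (ρ * p) ^ K := Finset.sum_range_succ _ K
  have hDA : D = A + ρ ^ K := Finset.sum_range_succ _ K
  have hkey : 0 ≤ A * B - p * C * D := key_ineq K ρ p hρ' hp0 hp1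
  have hrhs : (1 - p) + p * (ρ * p) ^ K / B = ((1 - p) * B + p * (ρ * p) ^ K) / B := by
    field_simp
  rw [hrhs, div_le_div_iff₀ hSρ hSx]
  have hxK : (ρ * p) ^ K = B - C := by linarith
  have hident : ((1 - p) * B + p * (ρ * p) ^ K) * D - ρ ^ K * B = A * B - p * C * D := by
    rw [hxK, hDA]; ring
  linarith
end

section
/- Fix an integer K ≥ 2 and reals λ > 0, μ > 0. Set q = λ/(λ+μ), ρ = λ/μ, a_i = Σ_{j=0}^{K−i} ρ^j for 1 ≤ i ≤ K, b_1 = 0 and b_i = Σ_{j=K−i+1}^{K−1} (K−j)·ρ^j for 2 ≤ i ≤ K. Suppose reals E_1, ..., E_K satisfy: E_1 = q·E_2 + 1/(λ+μ); E_i = (1−q)·E_{i−1} + q·E_{i+1} + 1/(λ+μ) for all 1 < i < K; and E_K = E_{K−1} + 1/μ. Then E_i = (i·a_i + b_i)/μ for every 1 ≤ i ≤ K. In particular, the mean busy period of the impatient class started with one customer equals E[Ψ_i] = a_1/μ. -/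
/-!
Clearing the denominator `λ + μ` turns each balance equation into
`μ (E i - E (i-1)) = λ (E (i+1) - E i) + 1`, where `E 0 = 0` makes the first equation fit the
same pattern. So the scaled increments `u i = μ (E (i+1) - E i)` satisfy `u i = ρ u (i+1) + 1`
with `u (K-1) = 1`, hence `u i = 1 + ρ + ⋯ + ρ^(K-1-i)`. Summing the increments, `μ E i` is a sum
of `i` truncated geometric series, in which `ρ^j` occurs `min i (K - j)` times.
-/

open Finset

lemma mul_sub_eq_mul_sub_add_one_of_balance {𝕜 : Type*} [Field 𝕜] {lam mu x y z : 𝕜}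
    (h : lam + mu ≠ 0)
    (hy : y = (1 - lam / (lam + mu)) * x + lam / (lam + mu) * z + 1 / (lam + mu)) :
    mu * (y - x) = lam * (z - y) + 1 := by
  subst hy
  field_simp
  ring

lemma eq_geom_sum_of_backward_recurrence {R : Type*} [Semiring R] {x : R} {u : ℕ → R} {N : ℕ}
    (hrec : ∀ n < N, u n = x * u (n + 1) + 1) (hN : u N = 1) :
    ∀ n ≤ N, u n = ∑ j ∈ range (N - n + 1), x ^ j := by
  intro n hn
  induction hn using Nat.decreasingInduction with
  | self => simp [hN]
  | of_succ n hn ih =>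
    rw [hrec n hn, ih, show N - n + 1 = N - (n + 1) + 1 + 1 by omega,
      geom_sum_succ (n := N - (n + 1) + 1)]

lemma sum_range_geom_sum_range_sub {R : Type*} [CommRing R] (x : R) {K i : ℕ} (hi : 1 ≤ i)
    (hiK : i ≤ K) :
    ∑ n ∈ range i, ∑ j ∈ range (K - n), x ^ j
      = i * ∑ j ∈ range (K - i + 1), x ^ j
        + ∑ j ∈ Icc (K - i + 1) (K - 1), ((K : R) - j) * x ^ j := by
  induction i, hi using Nat.le_induction with
  | base =>
    rw [Icc_eq_empty (by omega)]
    simp [show K - 1 + 1 = K by omega]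
  | succ i hi ih =>
    rw [sum_range_succ, ih (by omega), show K - (i + 1) + 1 = K - i by omega,
      ← insert_Icc_add_one_left_eq_Icc (show K - i ≤ K - 1 by omega), sum_insert (by simp),
      Nat.cast_sub (show i ≤ K by omega), sum_range_succ (n := K - i)]
    push_cast
    ring

/-- Solution of the first-moment busy-period recursions of the impatient class
under the PS policy. -/
theorem busy_period_first_moment
    (K : ℕ) (hK : 2 ≤ K) (lam mu : ℝ) (hlam : 0 < lam) (hmu : 0 < mu)
    (E : ℕ → ℝ)
    (h1 : E 1 = (lam / (lam + mu)) * E 2 + 1 / (lam + mu))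
    (hmid : ∀ i, 1 < i → i < K →
      E i = (1 - lam / (lam + mu)) * E (i - 1) + (lam / (lam + mu)) * E (i + 1)
            + 1 / (lam + mu))
    (hKeq : E K = E (K - 1) + 1 / mu) :
    (∀ i, 1 ≤ i → i ≤ K →
      E i = ((i : ℝ) * (∑ j ∈ Finset.range (K - i + 1), (lam / mu) ^ j)
            + ∑ j ∈ Finset.Icc (K - i + 1) (K - 1), ((K : ℝ) - (j : ℝ)) * (lam / mu) ^ j) / mu)
    ∧ E 1 = (∑ j ∈ Finset.range K, (lam / mu) ^ j) / mu := by
  have hlm : lam + mu ≠ 0 := by positivity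
  set F : ℕ → ℝ := Function.update E 0 0
  have hF0 : F 0 = 0 := Function.update_self ..
  have hFE : ∀ n, F (n + 1) = E (n + 1) := fun n => Function.update_of_ne n.succ_ne_zero ..
  have hrec : ∀ n < K - 1,
      mu * (F (n + 1) - F n) = lam / mu * (mu * (F (n + 2) - F (n + 1))) + 1 := by
    intro n hn
    rw [← mul_assoc, div_mul_cancel₀ _ hmu.ne']
    rcases n with _ | n
    · exact mul_sub_eq_mul_sub_add_one_of_balance hlm (by simpa [hF0, hFE] using h1)
    · simpa [hFE] using
        mul_sub_eq_mul_sub_add_one_of_balance hlm (hmid (n + 2) (by omega) (by omega))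
  have hlast : mu * (F (K - 1 + 1) - F (K - 1)) = 1 := by
    obtain ⟨k, rfl⟩ : ∃ k, K = k + 2 := ⟨K - 2, by omega⟩
    simp [hFE, hKeq, hmu.ne']
  have hincr := eq_geom_sum_of_backward_recurrence hrec hlast
  have hE : ∀ i ≤ K, mu * F i = ∑ n ∈ range i, ∑ j ∈ range (K - n), (lam / mu) ^ j := by
    intro i hi
    rw [← sub_zero (F i), ← hF0, ← sum_range_sub, mul_sum]
    refine sum_congr rfl fun n hn => ?_
    have hni : n < i := mem_range.mp hn
    rw [hincr n (by omega), show K - 1 - n + 1 = K - n by omega]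
  refine ⟨fun i hi hiK => ?_, ?_⟩
  · rw [← sum_range_geom_sum_range_sub _ hi hiK, ← hE i hiK, eq_div_iff hmu.ne', mul_comm]
    obtain ⟨n, rfl⟩ : ∃ n, i = n + 1 := ⟨i - 1, by omega⟩
    rw [hFE]
  · rw [eq_div_iff hmu.ne', mul_comm, ← hFE, hE 1 (by omega), sum_range_one, Nat.sub_zero]
end

section
/- Fix an integer K ≥ 2, a real q with 0 < q < 1, and reals c_1, ..., c_K. Suppose reals S_1, ..., S_K satisfy: S_1 = c_1 + q·S_2; S_i = c_i + q·S_{i+1} + (1−q)·S_{i−1} for all 1 < i < K; and S_K = S_{K−1} + c_K/(1−q). Then S_1 = Σ_{i=1}^{K} q^{i−1}·c_i/(1−q)^i. -/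
/-- Solution of the second-moment busy-period recursions of the impatient class
under the PS policy. -/
theorem busy_period_second_moment
    (K : ℕ) (hK : 2 ≤ K) (q : ℝ) (hq0 : 0 < q) (hq1 : q < 1)
    (c S : ℕ → ℝ)
    (h1 : S 1 = c 1 + q * S 2)
    (hmid : ∀ i, 1 < i → i < K →
      S i = c i + q * S (i + 1) + (1 - q) * S (i - 1))
    (hKeq : S K = S (K - 1) + c K / (1 - q)) :
    S 1 = ∑ i ∈ Finset.Icc 1 K, q ^ (i - 1) * c i / (1 - q) ^ i := by
  have h1q : (1 : ℝ) - q ≠ 0 := by linarith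
  set D : ℕ → ℝ := fun j => if j = 1 then S 1 else S j - S (j - 1) with hD
  have hrec : ∀ j, 1 ≤ j → j < K → (1 - q) * D j = c j + q * D (j + 1) := by
    intro j hj1 hjK
    rcases eq_or_lt_of_le hj1 with hj | hj
    · subst hj
      simp only [hD]
      norm_num
      linear_combination h1
    · have hmj := hmid j hj hjK
      simp only [hD]
      rw [if_neg (by omega), if_neg (by omega)]
      have : j + 1 - 1 = j := by omega
      rw [this]
      linear_combination hmj
  have hDK : D K = c K / (1 - q) := by
    simp only [hD]
    rw [if_neg (by omega)]
    linarith [hKeq]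
  have key : ∀ n : ℕ, ∀ j : ℕ, 1 ≤ j → j ≤ K → K - j = n →
      D j = ∑ i ∈ Finset.Icc j K, q ^ (i - j) * c i / (1 - q) ^ (i - j + 1) := by
    intro n
    induction n with
    | zero =>
      intro j hj1 hjK hn
      have : j = K := by omega
      subst this
      rw [Finset.Icc_self, Finset.sum_singleton]
      simp [hDK]
    | succ n ih =>
      intro j hj1 hjK hn
      have hjK' : j < K := by omega
      have h2 := hrec j hj1 hjK'
      have h3 := ih (j + 1) (by omega) (by omega) (by omega)
      have hins : Finset.Icc j K = insert j (Finset.Icc (j + 1) K) := by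
        ext x; simp only [Finset.mem_Icc, Finset.mem_insert]; omega
      rw [hins, Finset.sum_insert (by simp [Finset.mem_Icc])]
      have hsum : ∑ i ∈ Finset.Icc (j + 1) K, q ^ (i - j) * c i / (1 - q) ^ (i - j + 1)
          = (q / (1 - q)) * ∑ i ∈ Finset.Icc (j + 1) K,
              q ^ (i - (j + 1)) * c i / (1 - q) ^ (i - (j + 1) + 1) := by
        rw [Finset.mul_sum]
        apply Finset.sum_congr rfl
        intro i hi
        simp only [Finset.mem_Icc] at hi
        have e1 : i - j = (i - (j + 1)) + 1 := by omega
        rw [e1]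
        field_simp
        ring
      rw [hsum, ← h3]
      simp only [Nat.sub_self, pow_zero, zero_add, pow_one, one_mul]
      field_simp
      linarith [h2]
  have hfin := key (K - 1) 1 (le_refl 1) (by omega) rfl
  have hS1 : S 1 = D 1 := by simp [hD]
  rw [hS1, hfin]
  apply Finset.sum_congr rfl
  intro i hi
  simp only [Finset.mem_Icc] at hi
  have : i - 1 + 1 = i := by omega
  rw [this]
end

section
/- Let B be exponentially distributed with rate μ > 0; let N be ℕ-valued with conditional distribution given B = b Poisson with mean λ·b (λ > 0); and let Ψ_1, Ψ_2, ... be i.i.d. nonnegative random variables with finite second moment, independent of (B, N). Define Υ = B + Σ_{i=1}^{N} Ψ_i. Then E[Υ] = 1/μ + (λ/μ)·E[Ψ_1], and E[Υ²] = 2/μ² + 4λ·E[Ψ_1]/μ² + λ·E[Ψ_1²]/μ + 2λ²·(E[Ψ_1])²/μ². -/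
open MeasureTheory ProbabilityTheory Finset
open scoped ENNReal NNReal Nat

/-!
Conditionally on `(B, N) = (b, n)`, independence of `(B, N)` and the i.i.d. sequence `Ψ` turns the
moments of `Υ` into those of `b + Ψ₁ + ⋯ + Ψₙ`, namely `b + n m₁` and
`b² + 2 b n m₁ + n m₂ + n (n - 1) m₁²`, where `mₖ = E[Ψ₁ ^ k]`. Integrating these against the
law of `(B, N)` only needs the mixed moments
`E[B ^ j N (N - 1) ⋯ (N - k + 1)] = λ ^ k (j + k)! / μ ^ (j + k)`, which come from the factorial
moments `(λ b) ^ k` of the Poisson law and the moments `m! / μ ^ m` of the exponential law.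
All integrals are Lebesgue integrals in `ℝ≥0∞`: the integrands are nonnegative, so no
integrability has to be established before the values are known.
-/

theorem lintegral_descFactorial_poissonMeasure (r : ℝ≥0) (k : ℕ) :
    ∫⁻ n, (n.descFactorial k : ℝ≥0∞) ∂poissonMeasure r = (r : ℝ≥0∞) ^ k := by
  set p : ℕ → ℝ := fun n => Real.exp (-r) * r ^ n / (n)!
  -- The terms with `n < k` vanish, and shifting the index by `k` pulls out `r ^ k`.
  have hshift (n : ℕ) : ENNReal.ofReal (p (n + k)) * ((n + k).descFactorial k : ℝ≥0∞)
      = (r : ℝ≥0∞) ^ k * ENNReal.ofReal (p n) := by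
    have hfac : ((n + k)! : ℝ) = (n)! * (n + k).descFactorial k := by
      exact_mod_cast (Nat.add_sub_cancel n k ▸
        Nat.factorial_mul_descFactorial (Nat.le_add_left k n)).symm
    rw [← ENNReal.ofReal_natCast, ← ENNReal.ofReal_mul (by positivity),
      ← ENNReal.ofReal_coe_nnreal, ← ENNReal.ofReal_pow r.coe_nonneg,
      ← ENNReal.ofReal_mul (by positivity)]
    congr 1
    simp only [p, hfac, pow_add]
    field_simp
  have hlow : ∑ n ∈ range k, ENNReal.ofReal (p n) * (n.descFactorial k : ℝ≥0∞) = 0 :=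
    sum_eq_zero fun n hn => by simp [Nat.descFactorial_eq_zero_iff_lt.2 (mem_range.1 hn)]
  have htotal : ∑' n, ENNReal.ofReal (p n) = 1 := by
    rw [← ENNReal.ofReal_tsum_of_nonneg (fun n => by positivity)
      (hasSum_one_poissonMeasure r).summable, (hasSum_one_poissonMeasure r).tsum_eq,
      ENNReal.ofReal_one]
  calc ∫⁻ n, (n.descFactorial k : ℝ≥0∞) ∂poissonMeasure r
      = ∑' n, ENNReal.ofReal (p n) * (n.descFactorial k : ℝ≥0∞) := by
        rw [poissonMeasure, lintegral_sum_measure]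
        refine tsum_congr fun n => ?_
        rw [lintegral_smul_measure, lintegral_dirac]
        rfl
    _ = (r : ℝ≥0∞) ^ k := by
        rw [← ENNReal.summable.sum_add_tsum_nat_add', hlow, zero_add]
        simp_rw [hshift]
        rw [ENNReal.tsum_mul_left, htotal, mul_one]

theorem ae_nonneg_expMeasure (mu : ℝ) : ∀ᵐ b ∂expMeasure mu, 0 ≤ b := by
  rw [ae_iff, show {b : ℝ | ¬0 ≤ b} = Set.Iio 0 by ext; simp, expMeasure, gammaMeasure,
    withDensity_apply _ measurableSet_Iio]
  exact lintegral_gammaPDF_of_nonpos le_rfl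

theorem lintegral_ofReal_pow_expMeasure {mu : ℝ} (hmu : 0 < mu) (k : ℕ) :
    ∫⁻ b, ENNReal.ofReal b ^ k ∂expMeasure mu = ENNReal.ofReal ((k)! / mu ^ k) := by
  -- `b ^ k` times the `Exp(μ)` density is `k! / μ ^ k` times the `Gamma(k + 1, μ)` density.
  have hpdf (b : ℝ) : gammaPDF 1 mu b * ENNReal.ofReal b ^ k
      = ENNReal.ofReal ((k)! / mu ^ k) * gammaPDF (k + 1) mu b := by
    rcases lt_or_ge b 0 with hb | hb
    · simp [gammaPDF_of_neg hb]
    rw [gammaPDF_of_nonneg hb, gammaPDF_of_nonneg hb, ← ENNReal.ofReal_pow hb,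
      ← ENNReal.ofReal_mul (by positivity), ← ENNReal.ofReal_mul (by positivity)]
    congr 1
    rw [add_sub_cancel_right, Real.Gamma_nat_eq_factorial, Real.rpow_natCast, ← Nat.cast_succ,
      Real.rpow_natCast, pow_succ]
    simp only [Real.rpow_one, sub_self, Real.rpow_zero, Real.Gamma_one]
    field_simp
  have hmeas (a : ℝ) : Measurable (gammaPDF a mu) :=
    (measurable_gammaPDFReal a mu).ennreal_ofReal
  rw [expMeasure, gammaMeasure,
    lintegral_withDensity_eq_lintegral_mul _ (hmeas 1) (by fun_prop)]
  simp only [Pi.mul_apply, hpdf]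
  rw [lintegral_const_mul _ (hmeas _),
    lintegral_gammaPDF_eq_one (by positivity) hmu, mul_one]

section Mixture

variable {mu lam : ℝ} {κ : Kernel ℝ ℕ} [IsSFiniteKernel κ]

theorem lintegral_pow_mul_descFactorial_expMeasure_compProd (hmu : 0 < mu) (hlam : 0 ≤ lam)
    (hκ : ∀ b, 0 ≤ b → κ b = poissonMeasure (lam * b).toNNReal) (j k : ℕ) :
    ∫⁻ p, ENNReal.ofReal p.1 ^ j * (p.2.descFactorial k : ℝ≥0∞) ∂(expMeasure mu).compProd κ
      = ENNReal.ofReal (lam ^ k * (j + k)! / mu ^ (j + k)) := by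
  have := isProbabilityMeasure_expMeasure hmu
  rw [Measure.lintegral_compProd (by fun_prop)]
  calc ∫⁻ b, ∫⁻ n, ENNReal.ofReal b ^ j * (n.descFactorial k : ℝ≥0∞) ∂κ b ∂expMeasure mu
      = ∫⁻ b, ENNReal.ofReal lam ^ k * ENNReal.ofReal b ^ (j + k) ∂expMeasure mu := by
        refine lintegral_congr_ae ?_
        filter_upwards [ae_nonneg_expMeasure mu] with b hb
        rw [hκ b hb, lintegral_const_mul _ (by fun_prop),
          lintegral_descFactorial_poissonMeasure]
        change _ * ENNReal.ofReal (lam * b) ^ k = _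
        rw [ENNReal.ofReal_mul hlam]
        ring
    _ = ENNReal.ofReal (lam ^ k * (j + k)! / mu ^ (j + k)) := by
        rw [lintegral_const_mul _ (by fun_prop), lintegral_ofReal_pow_expMeasure hmu,
          ← ENNReal.ofReal_pow hlam, ← ENNReal.ofReal_mul (by positivity), mul_div_assoc]

theorem lintegral_expMeasure_compProd_add (hmu : 0 < mu) (hlam : 0 ≤ lam)
    (hκ : ∀ b, 0 ≤ b → κ b = poissonMeasure (lam * b).toNNReal) {α : ℝ} (hα : 0 ≤ α) :
    ∫⁻ p, ENNReal.ofReal p.1 + p.2 * ENNReal.ofReal α ∂(expMeasure mu).compProd κ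
      = ENNReal.ofReal (1 / mu + lam / mu * α) := by
  have h10 := lintegral_pow_mul_descFactorial_expMeasure_compProd hmu hlam hκ 1 0
  have h01 := lintegral_pow_mul_descFactorial_expMeasure_compProd hmu hlam hκ 0 1
  simp only [pow_one, pow_zero, Nat.descFactorial_zero, Nat.descFactorial_one, Nat.cast_one,
    mul_one, one_mul] at h10 h01
  rw [lintegral_add_left (by fun_prop), lintegral_mul_const _ (by fun_prop), h10, h01,
    ← ENNReal.ofReal_mul (by positivity), ← ENNReal.ofReal_add (by positivity) (by positivity)]
  norm_num

theorem lintegral_expMeasure_compProd_add_sq (hmu : 0 < mu) (hlam : 0 ≤ lam)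
    (hκ : ∀ b, 0 ≤ b → κ b = poissonMeasure (lam * b).toNNReal) {α γ : ℝ} (hα : 0 ≤ α)
    (hγ : 0 ≤ γ) :
    ∫⁻ p, ENNReal.ofReal p.1 ^ 2 + 2 * ENNReal.ofReal p.1 * (p.2 * ENNReal.ofReal α)
        + (p.2 * ENNReal.ofReal γ + p.2.descFactorial 2 * ENNReal.ofReal α ^ 2)
        ∂(expMeasure mu).compProd κ
      = ENNReal.ofReal (2 / mu ^ 2 + 4 * lam * α / mu ^ 2 + lam * γ / mu
          + 2 * lam ^ 2 * α ^ 2 / mu ^ 2) := by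
  have hmoment := lintegral_pow_mul_descFactorial_expMeasure_compProd hmu hlam hκ
  have h20 := hmoment 2 0
  have h11 := hmoment 1 1
  have h01 := hmoment 0 1
  have h02 := hmoment 0 2
  simp only [pow_one, pow_zero, Nat.descFactorial_zero, Nat.descFactorial_one, Nat.cast_one,
    mul_one, one_mul] at h20 h11 h01 h02
  have hcross : ∀ p : ℝ × ℕ, 2 * ENNReal.ofReal p.1 * (p.2 * ENNReal.ofReal α)
      = ENNReal.ofReal (2 * α) * (ENNReal.ofReal p.1 * p.2) := fun p => by
    rw [ENNReal.ofReal_mul zero_le_two, ENNReal.ofReal_ofNat]; ring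
  simp_rw [hcross]
  rw [lintegral_add_left (by fun_prop), lintegral_add_left (by fun_prop),
    lintegral_add_left (by fun_prop), lintegral_const_mul _ (by fun_prop),
    lintegral_mul_const _ (by fun_prop), lintegral_mul_const _ (by fun_prop),
    h20, h11, h01, h02, ← ENNReal.ofReal_pow hα]
  simp (disch := positivity) only [← ENNReal.ofReal_mul, ← ENNReal.ofReal_add]
  congr 1
  norm_num
  ring

end Mixture

theorem lintegral_comp_eq_lintegral_lintegral_of_indepFun {Ω α β : Type*} [MeasurableSpace Ω]
    [MeasurableSpace α] [MeasurableSpace β] {P : Measure Ω} [IsFiniteMeasure P] {X : Ω → α}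
    {Y : Ω → β} (hX : Measurable X) (hY : Measurable Y) (hXY : IndepFun X Y P)
    {F : α → β → ℝ≥0∞} (hF : Measurable (Function.uncurry F)) :
    ∫⁻ ω, F (X ω) (Y ω) ∂P = ∫⁻ x, ∫⁻ ω, F x (Y ω) ∂P ∂P.map X := by
  change ∫⁻ ω, Function.uncurry F (X ω, Y ω) ∂P = _
  rw [← lintegral_map hF (hX.prodMk hY),
    (indepFun_iff_map_prod_eq_prod_map_map hX.aemeasurable hY.aemeasurable).1 hXY,
    lintegral_prod _ hF.aemeasurable]
  refine lintegral_congr fun x => ?_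
  exact lintegral_map (hF.comp measurable_prodMk_left) hY

theorem measurable_sum_Icc : Measurable fun q : ℕ × (ℕ → ℝ) => ∑ i ∈ Icc 1 q.1, q.2 i :=
  measurable_from_prod_countable_right fun n =>
    Finset.measurable_sum (Icc 1 n) fun i _ => measurable_pi_apply i

theorem lintegral_comp_add_sum_Icc_of_indepFun {Ω : Type*} [MeasurableSpace Ω]
    {P : Measure Ω} [IsFiniteMeasure P] {B : Ω → ℝ} {N : Ω → ℕ} {Ψ : ℕ → Ω → ℝ} (hB : Measurable B)
    (hN : Measurable N) (hΨ : ∀ i, Measurable (Ψ i))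
    (hindep : IndepFun (fun ω => (B ω, N ω)) (fun ω i => Ψ i ω) P) {g : ℝ → ℝ≥0∞}
    (hg : Measurable g) :
    ∫⁻ ω, g (B ω + ∑ i ∈ Icc 1 (N ω), Ψ i ω) ∂P
      = ∫⁻ p, ∫⁻ ω, g (p.1 + ∑ i ∈ Icc 1 p.2, Ψ i ω) ∂P ∂P.map fun ω => (B ω, N ω) :=
  lintegral_comp_eq_lintegral_lintegral_of_indepFun (hB.prodMk hN) (measurable_pi_lambda _ hΨ)
    hindep (F := fun p ψ => g (p.1 + ∑ i ∈ Icc 1 p.2, ψ i))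
    (hg.comp (measurable_fst.fst.add
      (measurable_sum_Icc.comp (measurable_fst.snd.prodMk measurable_snd))))

section FiniteSums

variable {Ω ι : Type*} [MeasurableSpace Ω] {P : Measure Ω} {Y : ι → Ω → ℝ≥0∞} {a c : ℝ≥0∞}

theorem lintegral_finsetSum_of_lintegral_eq (hY : ∀ i, Measurable (Y i))
    (ha : ∀ i, ∫⁻ ω, Y i ω ∂P = a) (s : Finset ι) :
    ∫⁻ ω, ∑ i ∈ s, Y i ω ∂P = #s * a := by
  rw [lintegral_finsetSum s fun i _ => hY i, sum_congr rfl fun i _ => ha i, sum_const,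
    nsmul_eq_mul]

theorem lintegral_finsetSum_sq_of_lintegral_eq [DecidableEq ι]
    (hY : ∀ i, Measurable (Y i)) (hc : ∀ i, ∫⁻ ω, Y i ω ^ 2 ∂P = c)
    (hpair : ∀ i j, i ≠ j → ∫⁻ ω, Y i ω * Y j ω ∂P = a ^ 2) (s : Finset ι) :
    ∫⁻ ω, (∑ i ∈ s, Y i ω) ^ 2 ∂P = #s * c + (#s).descFactorial 2 * a ^ 2 := by
  have hrow (i : ι) (hi : i ∈ s) :
      ∑ j ∈ s, ∫⁻ ω, Y i ω * Y j ω ∂P = c + (#s - 1 : ℕ) * a ^ 2 := by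
    rw [← add_sum_erase s _ hi, ← hc i,
      sum_congr rfl fun j hj => hpair i j (ne_of_mem_erase hj).symm, sum_const,
      card_erase_of_mem hi, nsmul_eq_mul]
    simp only [sq]
  simp_rw [sq (∑ i ∈ s, _), sum_mul_sum]
  rw [lintegral_finsetSum (f := fun i ω => ∑ j ∈ s, Y i ω * Y j ω) s
    fun i _ => Finset.measurable_sum _ fun j _ => (hY i).mul (hY j)]
  simp_rw [lintegral_finsetSum (f := fun j ω => Y _ ω * Y j ω) s fun j _ => (hY _).mul (hY j)]
  rw [sum_congr rfl hrow, sum_const, nsmul_eq_mul, Nat.descFactorial_succ,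
    Nat.descFactorial_one]
  push_cast
  ring

variable [IsProbabilityMeasure P]

theorem lintegral_const_add_finsetSum (hY : ∀ i, Measurable (Y i))
    (ha : ∀ i, ∫⁻ ω, Y i ω ∂P = a) (x : ℝ≥0∞) (s : Finset ι) :
    ∫⁻ ω, x + ∑ i ∈ s, Y i ω ∂P = x + #s * a := by
  rw [lintegral_add_left measurable_const, lintegral_const, measure_univ, mul_one,
    lintegral_finsetSum_of_lintegral_eq hY ha]

theorem lintegral_const_add_finsetSum_sq [DecidableEq ι] (hY : ∀ i, Measurable (Y i))
    (ha : ∀ i, ∫⁻ ω, Y i ω ∂P = a) (hc : ∀ i, ∫⁻ ω, Y i ω ^ 2 ∂P = c)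
    (hpair : ∀ i j, i ≠ j → ∫⁻ ω, Y i ω * Y j ω ∂P = a ^ 2) (x : ℝ≥0∞) (s : Finset ι) :
    ∫⁻ ω, (x + ∑ i ∈ s, Y i ω) ^ 2 ∂P
      = x ^ 2 + 2 * x * (#s * a) + (#s * c + (#s).descFactorial 2 * a ^ 2) := by
  have hS : Measurable fun ω => ∑ i ∈ s, Y i ω := Finset.measurable_sum _ fun i _ => hY i
  simp_rw [add_sq]
  rw [lintegral_add_right _ (hS.pow_const 2), lintegral_add_left measurable_const,
    lintegral_const_mul _ hS, lintegral_const, measure_univ, mul_one,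
    lintegral_finsetSum_of_lintegral_eq hY ha,
    lintegral_finsetSum_sq_of_lintegral_eq hY hc hpair]

end FiniteSums

section IIDSums

variable {Ω : Type*} [MeasurableSpace Ω] {P : Measure Ω} {Ψ : ℕ → Ω → ℝ}

theorem lintegral_ofReal_pow_eq_ofReal_integral (hΨ : ∀ i, Measurable (Ψ i))
    (hΨ0 : ∀ i ω, 0 ≤ Ψ i ω) (hident : ∀ i, P.map (Ψ i) = P.map (Ψ 1)) {k : ℕ}
    (hint : Integrable (fun ω => Ψ 1 ω ^ k) P) (i : ℕ) :
    ∫⁻ ω, ENNReal.ofReal (Ψ i ω) ^ k ∂P = ENNReal.ofReal (∫ ω, Ψ 1 ω ^ k ∂P) := by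
  rw [ofReal_integral_eq_lintegral_ofReal hint (ae_of_all _ fun ω => pow_nonneg (hΨ0 1 ω) k)]
  simp_rw [← ENNReal.ofReal_pow (hΨ0 _ _)]
  exact (IdentDistrib.comp ⟨(hΨ i).aemeasurable, (hΨ 1).aemeasurable, hident i⟩
    (ENNReal.measurable_ofReal.comp (measurable_id.pow_const k))).lintegral_eq

variable [IsProbabilityMeasure P]

theorem lintegral_ofReal_const_add_sum (hΨ : ∀ i, Measurable (Ψ i))
    (hΨ0 : ∀ i ω, 0 ≤ Ψ i ω) (hident : ∀ i, P.map (Ψ i) = P.map (Ψ 1))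
    (hint : Integrable (Ψ 1) P) {b : ℝ} (hb : 0 ≤ b) (s : Finset ℕ) :
    ∫⁻ ω, ENNReal.ofReal (b + ∑ i ∈ s, Ψ i ω) ∂P
      = ENNReal.ofReal b + #s * ENNReal.ofReal (∫ ω, Ψ 1 ω ∂P) := by
  have hm := lintegral_ofReal_pow_eq_ofReal_integral hΨ hΨ0 hident (k := 1)
    (by simpa using hint)
  simp only [pow_one] at hm
  simp_rw [ENNReal.ofReal_add hb (sum_nonneg fun i _ => hΨ0 i _),
    ENNReal.ofReal_sum_of_nonneg fun i _ => hΨ0 i _]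
  exact lintegral_const_add_finsetSum (fun i => (hΨ i).ennreal_ofReal) hm _ s

theorem lintegral_ofReal_const_add_sum_sq (hΨ : ∀ i, Measurable (Ψ i))
    (hΨ0 : ∀ i ω, 0 ≤ Ψ i ω) (hiid : iIndepFun Ψ P) (hident : ∀ i, P.map (Ψ i) = P.map (Ψ 1))
    (hL2 : MemLp (Ψ 1) 2 P) {b : ℝ} (hb : 0 ≤ b) (s : Finset ℕ) :
    ∫⁻ ω, ENNReal.ofReal ((b + ∑ i ∈ s, Ψ i ω) ^ 2) ∂P
      = ENNReal.ofReal b ^ 2 + 2 * ENNReal.ofReal b * (#s * ENNReal.ofReal (∫ ω, Ψ 1 ω ∂P))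
        + (#s * ENNReal.ofReal (∫ ω, Ψ 1 ω ^ 2 ∂P)
          + (#s).descFactorial 2 * ENNReal.ofReal (∫ ω, Ψ 1 ω ∂P) ^ 2) := by
  have hm1 := lintegral_ofReal_pow_eq_ofReal_integral hΨ hΨ0 hident (k := 1)
    (by simpa using hL2.integrable one_le_two)
  have hm2 := lintegral_ofReal_pow_eq_ofReal_integral hΨ hΨ0 hident hL2.integrable_sq
  simp only [pow_one] at hm1
  have hpair (i j : ℕ) (hij : i ≠ j) :
      ∫⁻ ω, ENNReal.ofReal (Ψ i ω) * ENNReal.ofReal (Ψ j ω) ∂P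
        = ENNReal.ofReal (∫ ω, Ψ 1 ω ∂P) ^ 2 := by
    rw [lintegral_mul_eq_lintegral_mul_lintegral_of_indepFun''
      (hΨ i).ennreal_ofReal.aemeasurable (hΨ j).ennreal_ofReal.aemeasurable
      ((hiid.indepFun hij).comp ENNReal.measurable_ofReal ENNReal.measurable_ofReal),
      hm1, hm1, sq]
  simp_rw [ENNReal.ofReal_pow (add_nonneg hb (sum_nonneg fun i _ => hΨ0 i _)),
    ENNReal.ofReal_add hb (sum_nonneg fun i _ => hΨ0 i _),
    ENNReal.ofReal_sum_of_nonneg fun i _ => hΨ0 i _]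
  exact lintegral_const_add_finsetSum_sq (fun i => (hΨ i).ennreal_ofReal) hm1 hm2 hpair _ s

end IIDSums

/-- Moments of the effective server time `Υ = B + ∑_{i=1}^{N} Ψ_i`, where
`B ∼ Exp(μ)`, conditionally on `B = b` the count `N ∼ Poisson(λ b)`, and the
`Ψ_i` are i.i.d. nonnegative with finite second moment, independent of `(B, N)`. -/
theorem effective_server_time_moments
    {Ω : Type*} [MeasurableSpace Ω] (P : Measure Ω) [IsProbabilityMeasure P]
    (mu lam : ℝ) (hmu : 0 < mu) (hlam : 0 < lam)
    (B : Ω → ℝ) (N : Ω → ℕ) (hB : Measurable B) (hN : Measurable N)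
    (κ : Kernel ℝ ℕ) [IsMarkovKernel κ]
    (hκ : ∀ b : ℝ, 0 ≤ b → κ b = poissonMeasure (Real.toNNReal (lam * b)))
    (hjoint : Measure.map (fun ω => (B ω, N ω)) P = (expMeasure mu).compProd κ)
    (Ψ : ℕ → Ω → ℝ) (hΨmeas : ∀ i, Measurable (Ψ i))
    (hΨnonneg : ∀ i ω, 0 ≤ Ψ i ω)
    (hiid : iIndepFun Ψ P)
    (hident : ∀ i, Measure.map (Ψ i) P = Measure.map (Ψ 1) P)
    (hmom2 : MemLp (Ψ 1) 2 P)
    (hindep : IndepFun (fun ω => (B ω, N ω)) (fun ω i => Ψ i ω) P) :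
    (∫ ω, (B ω + ∑ i ∈ Finset.Icc 1 (N ω), Ψ i ω) ∂P
        = 1 / mu + (lam / mu) * ∫ ω, Ψ 1 ω ∂P)
    ∧ (∫ ω, (B ω + ∑ i ∈ Finset.Icc 1 (N ω), Ψ i ω) ^ 2 ∂P
        = 2 / mu ^ 2 + 4 * lam * (∫ ω, Ψ 1 ω ∂P) / mu ^ 2
          + lam * (∫ ω, (Ψ 1 ω) ^ 2 ∂P) / mu
          + 2 * lam ^ 2 * (∫ ω, Ψ 1 ω ∂P) ^ 2 / mu ^ 2) := by
  have hBN : Measurable fun ω => (B ω, N ω) := hB.prodMk hN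
  have hM0 : ∀ᵐ p ∂(expMeasure mu).compProd κ, 0 ≤ p.1 :=
    Measure.ae_compProd_of_ae_fst κ measurableSet_Ici (ae_nonneg_expMeasure mu)
  have hΥ0 : ∀ᵐ ω ∂P, 0 ≤ B ω + ∑ i ∈ Icc 1 (N ω), Ψ i ω :=
    (ae_of_ae_map hBN.aemeasurable (hjoint ▸ hM0)).mono fun ω hω =>
      add_nonneg hω (sum_nonneg fun i _ => hΨnonneg i ω)
  have hΥ : Measurable fun ω => B ω + ∑ i ∈ Icc 1 (N ω), Ψ i ω :=
    hB.add (measurable_sum_Icc.comp (hN.prodMk (measurable_pi_lambda _ hΨmeas)))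
  have hm1 : 0 ≤ ∫ ω, Ψ 1 ω ∂P := integral_nonneg (hΨnonneg 1)
  have hm2 : 0 ≤ ∫ ω, Ψ 1 ω ^ 2 ∂P := integral_nonneg fun ω => sq_nonneg _
  constructor
  · rw [integral_eq_lintegral_of_nonneg_ae hΥ0 hΥ.aestronglyMeasurable,
      lintegral_comp_add_sum_Icc_of_indepFun hB hN hΨmeas hindep ENNReal.measurable_ofReal,
      hjoint, lintegral_congr_ae (hM0.mono fun p hp => by
        rw [lintegral_ofReal_const_add_sum hΨmeas hΨnonneg hident
          (hmom2.integrable one_le_two) hp, Nat.card_Icc, add_tsub_cancel_right]),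
      lintegral_expMeasure_compProd_add hmu hlam.le hκ hm1,
      ENNReal.toReal_ofReal (by positivity)]
  · rw [integral_eq_lintegral_of_nonneg_ae (hΥ0.mono fun ω h => sq_nonneg _)
        (hΥ.pow_const 2).aestronglyMeasurable,
      lintegral_comp_add_sum_Icc_of_indepFun hB hN hΨmeas hindep
        (g := fun t => ENNReal.ofReal (t ^ 2)) (by fun_prop), hjoint,
      lintegral_congr_ae (hM0.mono fun p hp => by
        rw [lintegral_ofReal_const_add_sum_sq hΨmeas hΨnonneg hiid hident hmom2 hp,
          Nat.card_Icc, add_tsub_cancel_right]),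
      lintegral_expMeasure_compProd_add_sq hmu hlam.le hκ hm1 hm2,
      ENNReal.toReal_ofReal (by positivity)]
end

section
/- Fix an integer K ≥ 2 and reals ρ_i > 0, p ∈ (0,1], λ_t > 0, μ_t > 0 with λ_t·a_0 < μ_t, where ρ_{i,p} = ρ_i p and a_0 = Σ_{j=0}^{K} ρ_{i,p}^j. For each μ_i > 0 set λ_i = ρ_i·μ_i, and define: E_Ψ(μ_i) = a_1/μ_i with a_1 = Σ_{j=0}^{K−1} ρ_{i,p}^j; E_{Ψ²}(μ_i) = C/μ_i², where C > 0 depends only on ρ_{i,p} and K (C = μ_i²·Σ_{i=1}^{K} q^{i−1}c_i/(1−q)^i with q = ρ_{i,p}/(1+ρ_{i,p}) and the constants c_i of the busy-period second-moment formula); E_Υ = a_0/μ_t; and E_{Υ²}(μ_i) = 2a_0²/μ_t² + (ρ_{i,p}/(μ_t·μ_i²))·C. Define the lower sojourn time E^{M_L}(μ_i) = E_Υ + λ_t·E_{Υ²}(μ_i)/(2(1 − λ_t·E_Υ)) and the upper sojourn time E^{M_U}(μ_i) = (E_Υ + E_Ψ(μ_i)) + λ_t·(E_{Υ²}(μ_i)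 + E_{Ψ²}(μ_i) + 2E_Ψ(μ_i)·E_Υ)/(2(1 − λ_t·(E_Υ + E_Ψ(μ_i)))). Then, as μ_i → ∞, both E^{M_L}(μ_i) and E^{M_U}(μ_i) converge to a_0/(μ_t − λ_t·a_0); in particular E^{M_U}(μ_i) − E^{M_L}(μ_i) → 0. -/
/-!
Both sojourn times are Pollaczek–Khinchine formulas. As `μ_i → ∞` the busy-period terms
vanish, so the service moments of both systems tend to `m = a₀/μ_t` and `2m²`; under the
stability condition the formula is continuous there, and at moments `(m, 2m²)` it reduces to
the M/M/1 value `m/(1 - λ_t m) = a₀/(μ_t - λ_t a₀)`.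
-/

open Filter

/-- Expected sojourn time of the lower sandwiching M/G/1 system `𝓜_L`. -/
noncomputable def EML (K : ℕ) (r lamt μt C : ℝ) (μi : ℝ) : ℝ :=
  (∑ j ∈ Finset.range (K + 1), r ^ j) / μt
    + lamt * (2 * (∑ j ∈ Finset.range (K + 1), r ^ j) ^ 2 / μt ^ 2
        + (r / (μt * μi ^ 2)) * C)
      / (2 * (1 - lamt * ((∑ j ∈ Finset.range (K + 1), r ^ j) / μt)))

/-- Expected sojourn time of the upper sandwiching M/G/1 system `𝓜_U`. -/
noncomputable def EMU (K : ℕ) (r lamt μt C : ℝ) (μi : ℝ) : ℝ :=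
  ((∑ j ∈ Finset.range (K + 1), r ^ j) / μt + (∑ j ∈ Finset.range K, r ^ j) / μi)
    + lamt * ((2 * (∑ j ∈ Finset.range (K + 1), r ^ j) ^ 2 / μt ^ 2
          + (r / (μt * μi ^ 2)) * C)
        + C / μi ^ 2
        + 2 * ((∑ j ∈ Finset.range K, r ^ j) / μi)
            * ((∑ j ∈ Finset.range (K + 1), r ^ j) / μt))
      / (2 * (1 - lamt * ((∑ j ∈ Finset.range (K + 1), r ^ j) / μt
            + (∑ j ∈ Finset.range K, r ^ j) / μi)))

open Topology

/-- Pollaczek–Khinchine mean sojourn time of an M/G/1 queue with arrival rate `lam` and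
service-time moments `m1 = E[S]`, `m2 = E[S²]`. -/
noncomputable def pkSojourn (lam m1 m2 : ℝ) : ℝ :=
  m1 + lam * m2 / (2 * (1 - lam * m1))

/-- With `E[S²] = 2 E[S]²`, as for exponential service, the formula is the M/M/1 sojourn time. -/
theorem pkSojourn_two_mul_sq {lam m : ℝ} (h : 1 - lam * m ≠ 0) :
    pkSojourn lam m (2 * m ^ 2) = m / (1 - lam * m) := by
  rw [pkSojourn, mul_left_comm, mul_div_mul_left _ _ two_ne_zero, add_div' _ _ _ h]
  ring

theorem Filter.Tendsto.pkSojourn {α : Type*} {l : Filter α} {f g : α → ℝ} {lam m1 m2 : ℝ}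
    (hf : Tendsto f l (𝓝 m1)) (hg : Tendsto g l (𝓝 m2)) (h : 1 - lam * m1 ≠ 0) :
    Tendsto (fun x => pkSojourn lam (f x) (g x)) l (𝓝 (pkSojourn lam m1 m2)) :=
  hf.add ((hg.const_mul lam).div
    ((tendsto_const_nhds.sub (hf.const_mul lam)).const_mul 2) (mul_ne_zero two_ne_zero h))

theorem sandwich_sojourn_times_converge_general
    (K : ℕ) (ρ p lamt μt C : ℝ)
    (hmut : 0 < μt)
    (hstab : lamt * (∑ j ∈ Finset.range (K + 1), (ρ * p) ^ j) < μt) :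
    Tendsto (EML K (ρ * p) lamt μt C) atTop
      (nhds ((∑ j ∈ Finset.range (K + 1), (ρ * p) ^ j)
        / (μt - lamt * (∑ j ∈ Finset.range (K + 1), (ρ * p) ^ j))))
    ∧ Tendsto (EMU K (ρ * p) lamt μt C) atTop
      (nhds ((∑ j ∈ Finset.range (K + 1), (ρ * p) ^ j)
        / (μt - lamt * (∑ j ∈ Finset.range (K + 1), (ρ * p) ^ j))))
    ∧ Tendsto (fun μi => EMU K (ρ * p) lamt μt C μi - EML K (ρ * p) lamt μt C μi)
        atTop (nhds 0) := by
  set r := ρ * p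
  set a0 := ∑ j ∈ Finset.range (K + 1), r ^ j
  set a1 := ∑ j ∈ Finset.range K, r ^ j
  have hD : 1 - lamt * (a0 / μt) ≠ 0 := by
    have : lamt * (a0 / μt) < 1 := by rwa [mul_div_assoc', div_lt_one hmut]
    exact (sub_pos.2 this).ne'
  have hlim : pkSojourn lamt (a0 / μt) (2 * (a0 / μt) ^ 2) = a0 / (μt - lamt * a0) := by
    rw [pkSojourn_two_mul_sq hD]
    field_simp
  have hΨ : Tendsto (fun x : ℝ => a1 / x) atTop (𝓝 0) :=
    tendsto_const_nhds.div_atTop tendsto_id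
  have hΨ_sq : Tendsto (fun x : ℝ => C / x ^ 2) atTop (𝓝 0) :=
    tendsto_const_nhds.div_atTop (tendsto_pow_atTop two_ne_zero)
  have hΥ_sq : Tendsto (fun x : ℝ => r / (μt * x ^ 2) * C) atTop (𝓝 0) := by
    simpa using (tendsto_const_nhds.div_atTop
      ((tendsto_pow_atTop two_ne_zero).const_mul_atTop hmut)).mul_const C
  have hsq : 2 * a0 ^ 2 / μt ^ 2 = 2 * (a0 / μt) ^ 2 := by rw [div_pow, mul_div_assoc]
  have hL : Tendsto (EML K r lamt μt C) atTop (𝓝 (a0 / (μt - lamt * a0))) := by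
    rw [← hlim, ← hsq]
    exact tendsto_const_nhds.pkSojourn (by simpa using tendsto_const_nhds.add hΥ_sq) hD
  have hU : Tendsto (EMU K r lamt μt C) atTop (𝓝 (a0 / (μt - lamt * a0))) := by
    rw [← hlim, ← hsq]
    refine Tendsto.pkSojourn (by simpa using tendsto_const_nhds.add hΨ) ?_ hD
    simpa using ((tendsto_const_nhds.add hΥ_sq).add hΨ_sq).add
      ((hΨ.const_mul 2).mul_const (a0 / μt))
  exact ⟨hL, hU, by simpa using hU.sub hL⟩

/-- In the SFJ limit `μ_i → ∞` the sojourn times of the two sandwiching M/G/1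
systems both converge to `a₀/(μ_t − λ_t a₀)`; in particular their difference
vanishes. -/
theorem sandwich_sojourn_times_converge
    (K : ℕ) (hK : 2 ≤ K) (ρ p lamt μt C : ℝ)
    (hρ : 0 < ρ) (hp0 : 0 < p) (hp1 : p ≤ 1) (hlamt : 0 < lamt) (hmut : 0 < μt)
    (hC : 0 < C)
    (hstab : lamt * (∑ j ∈ Finset.range (K + 1), (ρ * p) ^ j) < μt) :
    Tendsto (EML K (ρ * p) lamt μt C) atTop
      (nhds ((∑ j ∈ Finset.range (K + 1), (ρ * p) ^ j)
        / (μt - lamt * (∑ j ∈ Finset.range (K + 1), (ρ * p) ^ j))))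
    ∧ Tendsto (EMU K (ρ * p) lamt μt C) atTop
      (nhds ((∑ j ∈ Finset.range (K + 1), (ρ * p) ^ j)
        / (μt - lamt * (∑ j ∈ Finset.range (K + 1), (ρ * p) ^ j))))
    ∧ Tendsto (fun μi => EMU K (ρ * p) lamt μt C μi - EML K (ρ * p) lamt μt C μi)
        atTop (nhds 0) :=
  sandwich_sojourn_times_converge_general K ρ p lamt μt C hmut hstab
end

section
/- Fix an integer K ≥ 1 and reals ρ_i > 0, p ∈ [0,1]. Set ρ_{i,p} = ρ_i p, ǎ_0 = Σ_{j=0}^{K} (K·ρ_{i,p})^j/j!, η = Σ_{j=0}^{K−1} ((K·ρ_{i,p})^j/j!)·(K−j)/K, and P_B^{CD}(p) = (1−p) + p·(K·ρ_{i,p})^K/(K!·ǎ_0). Then 1 − ρ_i·(1 − P_B^{CD}(p)) = η/ǎ_0. Consequently, for any λ_t > 0 and μ_t > 0 with λ_t·ǎ_0 < η·μ_t, one has 1/(μ_t·(1 − ρ_i·(1 − P_B^{CD}(p))) − λ_t) = ǎ_0/(η·μ_t − λ_t·ǎ_0); that is, the CD policies satisfy the pseudo conservation law E_{S_t}(P_B)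 = 1/(μ_t(1 − ρ_i(1 − P_B)) − λ_t). -/
/-!
Write `a = Kρp` and `S = ∑_{j ≤ K} a^j/j!`. Since `j · a^j/j! = a · a^{j-1}/(j-1)!`, the idle-weighted
sum `η = ∑_{j < K} (a^j/j!)(K - j)/K` collapses to `(1 - ρp) S + ρp · a^K/K!`. Dividing by `S` gives
`η/S = 1 - ρp (1 - a^K/(K! S))`, which is exactly `1 - ρ(1 - P_B^{CD}(p))`; the sojourn-time formula
is then a rearrangement.
-/

open Finset

section ExpPartialSum

variable {𝕜 : Type*} [Field 𝕜] [CharZero 𝕜]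

theorem sum_range_succ_mul_pow_div_factorial (a : 𝕜) (n : ℕ) :
    ∑ j ∈ range (n + 1), (j : 𝕜) * (a ^ j / j.factorial)
      = a * ∑ j ∈ range n, a ^ j / j.factorial := by
  rw [sum_range_succ', mul_sum]
  simp only [Nat.cast_zero, zero_mul, add_zero]
  refine sum_congr rfl fun j _ => ?_
  rw [Nat.factorial_succ, pow_succ]
  push_cast
  field_simp

theorem sum_pow_div_factorial_mul_idle_fraction {K : ℕ} (hK : (K : 𝕜) ≠ 0) (r : 𝕜) :
    ∑ j ∈ range K, ((K * r) ^ j / j.factorial) * ((K - j) / K)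
      = (1 - r) * ∑ j ∈ range (K + 1), (K * r) ^ j / j.factorial
        + r * ((K * r) ^ K / K.factorial) := by
  have hweighted := sum_range_succ_mul_pow_div_factorial (K * r) K
  rw [sum_range_succ] at hweighted ⊢
  have hsplit : ∑ j ∈ range K, ((K * r) ^ j / j.factorial) * ((K - j) / K)
      = ∑ j ∈ range K, (K * r) ^ j / j.factorial
        - (∑ j ∈ range K, (j : 𝕜) * ((K * r) ^ j / j.factorial)) / K := by
    rw [sum_div, ← sum_sub_distrib]
    refine sum_congr rfl fun j _ => ?_
    field_simp
  have hW : (∑ j ∈ range K, (j : 𝕜) * ((K * r) ^ j / j.factorial)) / K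
      = r * ∑ j ∈ range K, (K * r) ^ j / j.factorial - (K * r) ^ K / K.factorial := by
    rw [div_eq_iff hK]
    linear_combination hweighted
  rw [hsplit, hW]
  ring

end ExpPartialSum

theorem sum_range_succ_pow_div_factorial_pos {a : ℝ} (ha : 0 ≤ a) (n : ℕ) :
    0 < ∑ j ∈ range (n + 1), a ^ j / j.factorial := by
  rw [sum_range_succ']
  positivity

theorem cd_pseudo_conservation_general
    (K : ℕ) (hK : 1 ≤ K) (ρ p : ℝ) (hρ : 0 < ρ) (hp0 : 0 ≤ p) :
    (1 - ρ * (1 - ((1 - p) + p * ((K : ℝ) * (ρ * p)) ^ K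
          / ((Nat.factorial K : ℝ)
              * ∑ j ∈ Finset.range (K + 1),
                  ((K : ℝ) * (ρ * p)) ^ j / (Nat.factorial j : ℝ))))
        = (∑ j ∈ Finset.range K,
              (((K : ℝ) * (ρ * p)) ^ j / (Nat.factorial j : ℝ)) * (((K : ℝ) - j) / K))
          / (∑ j ∈ Finset.range (K + 1),
              ((K : ℝ) * (ρ * p)) ^ j / (Nat.factorial j : ℝ)))
    ∧ ∀ lamt μt : ℝ, 0 < lamt → 0 < μt →
        lamt * (∑ j ∈ Finset.range (K + 1),
            ((K : ℝ) * (ρ * p)) ^ j / (Nat.factorial j : ℝ))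
          < (∑ j ∈ Finset.range K,
              (((K : ℝ) * (ρ * p)) ^ j / (Nat.factorial j : ℝ)) * (((K : ℝ) - j) / K)) * μt →
        1 / (μt * (1 - ρ * (1 - ((1 - p) + p * ((K : ℝ) * (ρ * p)) ^ K
              / ((Nat.factorial K : ℝ)
                  * ∑ j ∈ Finset.range (K + 1),
                      ((K : ℝ) * (ρ * p)) ^ j / (Nat.factorial j : ℝ))))) - lamt)
          = (∑ j ∈ Finset.range (K + 1),
                ((K : ℝ) * (ρ * p)) ^ j / (Nat.factorial j : ℝ))
              / ((∑ j ∈ Finset.range K,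
                    (((K : ℝ) * (ρ * p)) ^ j / (Nat.factorial j : ℝ))
                      * (((K : ℝ) - j) / K)) * μt
                  - lamt * (∑ j ∈ Finset.range (K + 1),
                      ((K : ℝ) * (ρ * p)) ^ j / (Nat.factorial j : ℝ))) := by
  have hKne : (K : ℝ) ≠ 0 := Nat.cast_ne_zero.mpr (by omega)
  rw [sum_pow_div_factorial_mul_idle_fraction hKne]
  set S := ∑ j ∈ range (K + 1), ((K : ℝ) * (ρ * p)) ^ j / j.factorial
  have hS : S ≠ 0 := (sum_range_succ_pow_div_factorial_pos (by positivity) K).ne'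
  have hfrac : 1 - ρ * (1 - ((1 - p) + p * ((K : ℝ) * (ρ * p)) ^ K / (K.factorial * S)))
      = ((1 - ρ * p) * S + ρ * p * (((K : ℝ) * (ρ * p)) ^ K / K.factorial)) / S := by
    field_simp
    ring
  refine ⟨hfrac, fun lamt μt _ _ _ => ?_⟩
  rw [hfrac]
  field_simp

/-- The CD policies satisfy the pseudo conservation law. -/
theorem cd_pseudo_conservation
    (K : ℕ) (hK : 1 ≤ K) (ρ p : ℝ) (hρ : 0 < ρ) (hp0 : 0 ≤ p) (hp1 : p ≤ 1) :
    (1 - ρ * (1 - ((1 - p) + p * ((K : ℝ) * (ρ * p)) ^ K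
          / ((Nat.factorial K : ℝ)
              * ∑ j ∈ Finset.range (K + 1),
                  ((K : ℝ) * (ρ * p)) ^ j / (Nat.factorial j : ℝ))))
        = (∑ j ∈ Finset.range K,
              (((K : ℝ) * (ρ * p)) ^ j / (Nat.factorial j : ℝ)) * (((K : ℝ) - j) / K))
          / (∑ j ∈ Finset.range (K + 1),
              ((K : ℝ) * (ρ * p)) ^ j / (Nat.factorial j : ℝ)))
    ∧ ∀ lamt μt : ℝ, 0 < lamt → 0 < μt →
        lamt * (∑ j ∈ Finset.range (K + 1),
            ((K : ℝ) * (ρ * p)) ^ j / (Nat.factorial j : ℝ))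
          < (∑ j ∈ Finset.range K,
              (((K : ℝ) * (ρ * p)) ^ j / (Nat.factorial j : ℝ)) * (((K : ℝ) - j) / K)) * μt →
        1 / (μt * (1 - ρ * (1 - ((1 - p) + p * ((K : ℝ) * (ρ * p)) ^ K
              / ((Nat.factorial K : ℝ)
                  * ∑ j ∈ Finset.range (K + 1),
                      ((K : ℝ) * (ρ * p)) ^ j / (Nat.factorial j : ℝ))))) - lamt)
          = (∑ j ∈ Finset.range (K + 1),
                ((K : ℝ) * (ρ * p)) ^ j / (Nat.factorial j : ℝ))
              / ((∑ j ∈ Finset.range K,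
                    (((K : ℝ) * (ρ * p)) ^ j / (Nat.factorial j : ℝ))
                      * (((K : ℝ) - j) / K)) * μt
                  - lamt * (∑ j ∈ Finset.range (K + 1),
                      ((K : ℝ) * (ρ * p)) ^ j / (Nat.factorial j : ℝ))) :=
  cd_pseudo_conservation_general K hK ρ p hρ hp0
end

section
/- Let ρ > 0 and for each integer K ≥ 1 set P_B^{CD}(1)(K) = (Kρ)^K/K! divided by Σ_{j=0}^{K} (Kρ)^j/j!. If ρ ≤ 1 then P_B^{CD}(1)(K) → 0 as K → ∞; if ρ > 1 then P_B^{CD}(1)(K) → 1 − 1/ρ as K → ∞. -/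
/-!
After reversing the order of summation, the reciprocal of the Erlang-B probability with
offered load `Kρ` and `K` servers is `∑_{i ≤ K} (K)_i / K^i · ρ⁻ⁱ`, where `(K)_i / K^i ≤ 1`
tends to `1` for each fixed `i`. For `ρ > 1` dominated convergence makes this sum tend to the
geometric series `∑ ρ⁻ⁱ = ρ / (ρ - 1)`. For `ρ ≤ 1` that series diverges, and each of its
partial sums is the limit of a truncation of the reciprocal, so the reciprocal tends to `∞`.
-/

open Filter Topology Finset

noncomputable def erlangB (x : ℝ) (K : ℕ) : ℝ :=
  (x ^ K / K.factorial) / ∑ j ∈ range (K + 1), x ^ j / j.factorial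

theorem sum_range_pow_div_factorial_eq_mul {𝕜 : Type*} [Field 𝕜] [CharZero 𝕜] {x : 𝕜}
    (hx : x ≠ 0) (K : ℕ) :
    ∑ j ∈ range (K + 1), x ^ j / j.factorial
      = x ^ K / K.factorial * ∑ i ∈ range (K + 1), (K.descFactorial i : 𝕜) / x ^ i := by
  rw [mul_sum, ← sum_range_reflect]
  refine sum_congr rfl fun i hi => ?_
  have hiK : i ≤ K := Nat.lt_succ_iff.mp (mem_range.mp hi)
  have hfac : ((K - i).factorial : 𝕜) * K.descFactorial i = K.factorial := by
    exact_mod_cast Nat.factorial_mul_descFactorial hiK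
  have hdesc : (K.descFactorial i : 𝕜) ≠ 0 := by
    exact_mod_cast (Nat.descFactorial_pos.mpr hiK).ne'
  rw [Nat.add_sub_cancel, ← hfac, ← pow_sub_mul_pow x hiK]
  field_simp

theorem erlangB_eq_inv_sum {x : ℝ} (hx : x ≠ 0) (K : ℕ) :
    erlangB x K = (∑ i ∈ range (K + 1), (K.descFactorial i : ℝ) / x ^ i)⁻¹ := by
  have hlead : x ^ K / K.factorial ≠ 0 := by
    have := K.factorial_ne_zero
    positivity
  rw [erlangB, sum_range_pow_div_factorial_eq_mul hx, div_mul_cancel_left₀ hlead]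

noncomputable def descFactorialRatio (K i : ℕ) : ℝ := K.descFactorial i / (K : ℝ) ^ i

theorem descFactorialRatio_nonneg (K i : ℕ) : 0 ≤ descFactorialRatio K i := by
  unfold descFactorialRatio
  positivity

theorem descFactorialRatio_le_one (K i : ℕ) : descFactorialRatio K i ≤ 1 := by
  rcases Nat.eq_zero_or_pos K with rfl | hK
  · cases i <;> simp [descFactorialRatio]
  · rw [descFactorialRatio, div_le_one (by positivity)]
    exact_mod_cast Nat.descFactorial_le_pow K i

theorem descFactorialRatio_eq_zero_of_lt {K i : ℕ} (h : K < i) : descFactorialRatio K i = 0 := by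
  simp [descFactorialRatio, Nat.descFactorial_eq_zero_iff_lt.mpr h]

theorem tendsto_descFactorialRatio (i : ℕ) :
    Tendsto (descFactorialRatio · i) atTop (𝓝 1) :=
  (Asymptotics.isEquivalent_iff_tendsto_one ((eventually_ne_atTop 0).mono fun _ hK =>
    pow_ne_zero i (Nat.cast_ne_zero.mpr hK))).mp (isEquivalent_descFactorial i)

noncomputable def reciprocalSum (r : ℝ) (K : ℕ) : ℝ :=
  ∑ i ∈ range (K + 1), descFactorialRatio K i * r ^ i

theorem erlangB_mul_eq_inv_reciprocalSum {ρ : ℝ} (hρ : ρ ≠ 0) {K : ℕ} (hK : K ≠ 0) :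
    erlangB (K * ρ) K = (reciprocalSum ρ⁻¹ K)⁻¹ := by
  have hx : (K : ℝ) * ρ ≠ 0 := mul_ne_zero (Nat.cast_ne_zero.mpr hK) hρ
  rw [erlangB_eq_inv_sum hx, reciprocalSum]
  congr 1
  refine sum_congr rfl fun i _ => ?_
  rw [descFactorialRatio]
  ring

theorem tendsto_reciprocalSum_of_lt_one {r : ℝ} (hr₀ : 0 ≤ r) (hr₁ : r < 1) :
    Tendsto (reciprocalSum r) atTop (𝓝 (1 - r)⁻¹) := by
  have htsum : ∀ K, reciprocalSum r K = ∑' i, descFactorialRatio K i * r ^ i := fun K =>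
    (tsum_eq_sum fun i hi => by
      rw [descFactorialRatio_eq_zero_of_lt (by simpa using hi), zero_mul]).symm
  simp only [funext htsum, ← tsum_geometric_of_lt_one hr₀ hr₁]
  refine tendsto_tsum_of_dominated_convergence (summable_geometric_of_lt_one hr₀ hr₁)
    (fun i => by simpa using (tendsto_descFactorialRatio i).mul_const (r ^ i))
    (Eventually.of_forall fun K i => ?_)
  rw [Real.norm_of_nonneg (by have := descFactorialRatio_nonneg K i; positivity)]
  exact mul_le_of_le_one_left (by positivity) (descFactorialRatio_le_one K i)

theorem tendsto_reciprocalSum_atTop_of_one_le {r : ℝ} (hr : 1 ≤ r) :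
    Tendsto (reciprocalSum r) atTop atTop := by
  refine tendsto_atTop.mpr fun b => ?_
  obtain ⟨N, hbN⟩ := exists_nat_gt b
  have hpartial : Tendsto (fun K => ∑ i ∈ range N, descFactorialRatio K i * r ^ i) atTop
      (𝓝 (∑ i ∈ range N, r ^ i)) := by
    simpa using tendsto_finsetSum _ fun i _ => (tendsto_descFactorialRatio i).mul_const (r ^ i)
  have hgeom : (N : ℝ) ≤ ∑ i ∈ range N, r ^ i := by
    simpa using card_nsmul_le_sum (range N) _ 1 fun i _ => one_le_pow₀ hr
  filter_upwards [hpartial.eventually (lt_mem_nhds (hbN.trans_le hgeom)),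
    eventually_ge_atTop N] with K hbK hNK
  refine hbK.le.trans (sum_le_sum_of_subset_of_nonneg (range_subset_range.mpr (by omega))
    fun i _ _ => ?_)
  have := descFactorialRatio_nonneg K i
  positivity

/-- Limit of the Erlang-B blocking probability of the CD policy with full
admission, as `K → ∞`. -/
theorem cd_blocking_limit (ρ : ℝ) (hρ : 0 < ρ) :
    (ρ ≤ 1 → Tendsto (fun K : ℕ =>
        (((K : ℝ) * ρ) ^ K / (Nat.factorial K : ℝ))
          / ∑ j ∈ Finset.range (K + 1), ((K : ℝ) * ρ) ^ j / (Nat.factorial j : ℝ))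
        atTop (nhds 0))
    ∧ (1 < ρ → Tendsto (fun K : ℕ =>
        (((K : ℝ) * ρ) ^ K / (Nat.factorial K : ℝ))
          / ∑ j ∈ Finset.range (K + 1), ((K : ℝ) * ρ) ^ j / (Nat.factorial j : ℝ))
        atTop (nhds (1 - 1 / ρ))) := by
  change (ρ ≤ 1 → Tendsto (fun K : ℕ => erlangB (K * ρ) K) atTop (𝓝 0)) ∧
    (1 < ρ → Tendsto (fun K : ℕ => erlangB (K * ρ) K) atTop (𝓝 (1 - 1 / ρ)))
  have hB : (fun K => (reciprocalSum ρ⁻¹ K)⁻¹) =ᶠ[atTop] fun K : ℕ => erlangB (K * ρ) K :=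
    (eventually_ne_atTop 0).mono fun K hK => (erlangB_mul_eq_inv_reciprocalSum hρ.ne' hK).symm
  refine ⟨fun hρ₁ => ?_, fun hρ₁ => ?_⟩
  · have hdiv := tendsto_reciprocalSum_atTop_of_one_le ((one_le_inv₀ hρ).mpr hρ₁)
    exact (tendsto_inv_atTop_zero.comp hdiv).congr' hB
  · have hr₁ : ρ⁻¹ < 1 := inv_lt_one_of_one_lt₀ hρ₁
    have hlim := (tendsto_reciprocalSum_of_lt_one (inv_nonneg.mpr hρ.le) hr₁).inv₀
      (inv_ne_zero (sub_ne_zero.mpr hr₁.ne'))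
    rw [inv_inv] at hlim
    rw [one_div]
    exact hlim.congr' hB
end

section
/- For every integer K ≥ 1 and every real ρ > 0, the Erlang-B blocking probability dominates the geometric (PS) blocking probability: (Kρ)^K/K! / (Σ_{j=0}^{K} (Kρ)^j/j!) ≥ ρ^K / (Σ_{j=0}^{K} ρ^j). -/
/-- Key combinatorial inequality: for `j ≤ K`, `K! * K^j ≤ j! * K^K`. -/
lemma aux_fact_pow (K : ℕ) : ∀ d j, j + d = K →
    K.factorial * K ^ j ≤ j.factorial * K ^ K := by
  intro d
  induction d with
  | zero =>
    intro j h
    have : j = K := by omega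
    subst this; exact le_rfl
  | succ d ih =>
    intro j h
    have h' : (j + 1) + d = K := by omega
    have A := ih (j + 1) h'
    have hjK : j + 1 ≤ K := by omega
    have key : (j + 1) * (K.factorial * K ^ j) ≤ (j + 1) * (j.factorial * K ^ K) := by
      calc (j + 1) * (K.factorial * K ^ j)
          ≤ K * (K.factorial * K ^ j) := Nat.mul_le_mul_right _ hjK
        _ = K.factorial * K ^ (j + 1) := by ring
        _ ≤ (j + 1).factorial * K ^ K := A
        _ = (j + 1) * (j.factorial * K ^ K) := by
            rw [Nat.factorial_succ]; ring
    exact Nat.le_of_mul_le_mul_left key (Nat.succ_pos j)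

/-- The Erlang-B (CD) blocking probability dominates the geometric (PS) one. -/
theorem cd_blocking_ge_ps_blocking (K : ℕ) (hK : 1 ≤ K) (ρ : ℝ) (hρ : 0 < ρ) :
    (((K : ℝ) * ρ) ^ K / (Nat.factorial K : ℝ))
        / (∑ j ∈ Finset.range (K + 1), ((K : ℝ) * ρ) ^ j / (Nat.factorial j : ℝ))
      ≥ ρ ^ K / (∑ j ∈ Finset.range (K + 1), ρ ^ j) := by
  have hKpos : (0 : ℝ) < (K : ℝ) := by exact_mod_cast Nat.lt_of_lt_of_le Nat.zero_lt_one hK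
  have hKρ : (0 : ℝ) < (K : ℝ) * ρ := mul_pos hKpos hρ
  have hS1 : (0 : ℝ) < ∑ j ∈ Finset.range (K + 1), ((K : ℝ) * ρ) ^ j / (Nat.factorial j : ℝ) := by
    apply Finset.sum_pos
    · intro j _
      exact div_pos (pow_pos hKρ j) (by exact_mod_cast Nat.factorial_pos j)
    · exact ⟨0, Finset.mem_range.mpr (Nat.succ_pos K)⟩
  have hS2 : (0 : ℝ) < ∑ j ∈ Finset.range (K + 1), ρ ^ j :=
    Finset.sum_pos (fun j _ => pow_pos hρ j) ⟨0, Finset.mem_range.mpr (Nat.succ_pos K)⟩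
  rw [ge_iff_le, div_le_div_iff₀ hS2 hS1]
  rw [Finset.mul_sum, Finset.mul_sum]
  apply Finset.sum_le_sum
  intro j hj
  have hjK : j ≤ K := Nat.lt_succ_iff.mp (Finset.mem_range.mp hj)
  have hnat := aux_fact_pow K (K - j) j (by omega)
  have hreal : (K.factorial : ℝ) * (K : ℝ) ^ j ≤ (j.factorial : ℝ) * (K : ℝ) ^ K := by
    exact_mod_cast hnat
  have hfK : (0 : ℝ) < (K.factorial : ℝ) := by exact_mod_cast K.factorial_pos
  have hfj : (0 : ℝ) < (j.factorial : ℝ) := by exact_mod_cast j.factorial_pos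
  have hρK : (0 : ℝ) < ρ ^ K * ρ ^ j := mul_pos (pow_pos hρ K) (pow_pos hρ j)
  have : (K : ℝ) ^ j / (j.factorial : ℝ) ≤ (K : ℝ) ^ K / (K.factorial : ℝ) := by
    rw [div_le_div_iff₀ hfj hfK]
    nlinarith
  calc ρ ^ K * (((K : ℝ) * ρ) ^ j / (Nat.factorial j : ℝ))
      = (ρ ^ K * ρ ^ j) * ((K : ℝ) ^ j / (j.factorial : ℝ)) := by
        rw [mul_pow]; ring
    _ ≤ (ρ ^ K * ρ ^ j) * ((K : ℝ) ^ K / (K.factorial : ℝ)) := by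
        exact mul_le_mul_of_nonneg_left this (le_of_lt hρK)
    _ = ((K : ℝ) * ρ) ^ K / (Nat.factorial K : ℝ) * ρ ^ j := by
        rw [mul_pow]; ring
end

section
/- Fix an integer K ≥ 2 and reals ρ > 0, μ_t > 0. For each μ_i > 0 set λ̃ = ρ·μ_i, α_i = λ̃ + i·μ_i + (K−i)·μ_t/K for 0 ≤ i ≤ K, and γ_i = i·μ_i + (K−i)·μ_t/K. Define recursively: m_K = 1/γ_K; m_{K−1} = (1 + m_K·λ̃)/γ_{K−1}; n_{K−1} = (K−1)·μ_i/γ_{K−1}; and for i = 2, ..., K−1 (decreasing index K−i): m_{K−i} = (1 + m_{K−i+1}·λ̃)/(α_{K−i} − n_{K−i+1}·λ̃) and n_{K−i} = (K−i)·μ_i/(α_{K−i} − n_{K−i+1}·λ̃). Then, as μ_i → ∞ (with ρ fixed), the first moment of the effective server time, E[Υ̌_0] = (1 + m_1·λ̃)/(λ̃ + μ_t − n_1·λ̃), converges to ǎ_0/(η·μ_t), where ǎ_0 = Σ_{j=0}^{K} ρ^j/j! and η = Σ_{j=0}^{K−1} (ρ^j/j!)·(K−j)/K. -/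
/-!
Write `λ̃ = ρ μᵢ`. The denominator of the recursion is
`α_j - n_{j+1} λ̃ = j μᵢ + (K - j) μₜ / K + λ̃ (1 - n_{j+1})`, so once `λ̃ (1 - n_{j+1})` converges it
is `j μᵢ + O(1)`; then `m_j λ̃` and `λ̃ (1 - n_j) = λ̃ ((K - j) μₜ / K + λ̃ (1 - n_{j+1})) / (α_j - n_{j+1} λ̃)`
converge as well, to `W_j = ρ / j (1 + W_{j+1})` and `V_j = ρ / j ((K - j) μₜ / K + V_{j+1})`.
Unrolling these from `j = K` gives tail sums of the Poisson weights `ρ^l / l!`, and since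
`E[Υ̌₀] = (1 + m₁ λ̃) / (μₜ + λ̃ (1 - n₁))`, the limit is `(1 + W₁) / (μₜ + V₁) = ǎ₀ / (η μₜ)`.
-/

open Filter

/-- `α_i = λ̃ + i·μᵢ + (K−i)·μ_t/K` with `λ̃ = ρ·μᵢ`. -/
noncomputable def alphaCD (K : ℕ) (ρ μt μi : ℝ) (i : ℕ) : ℝ :=
  ρ * μi + (i : ℝ) * μi + ((K : ℝ) - (i : ℝ)) * μt / K

/-- `γ_i = i·μᵢ + (K−i)·μ_t/K`. -/
noncomputable def gammaCD (K : ℕ) (μt μi : ℝ) (i : ℕ) : ℝ :=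
  (i : ℝ) * μi + ((K : ℝ) - (i : ℝ)) * μt / K

open Topology Nat

theorem tendsto_self_div_linear {j W : ℝ} (hj : j ≠ 0) {w : ℝ → ℝ}
    (hw : Tendsto w atTop (𝓝 W)) :
    Tendsto (fun x => x / (j * x + w x)) atTop (𝓝 j⁻¹) := by
  have hlin : Tendsto (fun x => j + w x * x⁻¹) atTop (𝓝 j) := by
    simpa using tendsto_const_nhds.add (hw.mul tendsto_inv_atTop_zero)
  refine (hlin.inv₀ hj).congr' ?_
  filter_upwards [eventually_ne_atTop 0] with x hx
  field_simp

theorem tendsto_backward_step {ρ j c A B : ℝ} (hj : j ≠ 0) {u v mj nj : ℝ → ℝ}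
    (hu : Tendsto u atTop (𝓝 A)) (hv : Tendsto v atTop (𝓝 B))
    (hm : ∀ᶠ x in atTop, mj x = (1 + u x) / (j * x + (c + v x)))
    (hn : ∀ᶠ x in atTop, nj x = j * x / (j * x + (c + v x))) :
    Tendsto (fun x => mj x * (ρ * x)) atTop (𝓝 (ρ / j * (1 + A))) ∧
      Tendsto (fun x => ρ * x * (1 - nj x)) atTop (𝓝 (ρ / j * (c + B))) := by
  have hq := tendsto_self_div_linear hj (hv.const_add c)
  have hD : ∀ᶠ x in atTop, j * x + (c + v x) ≠ 0 := by
    filter_upwards [hq.eventually_ne (inv_ne_zero hj)] with x hx hD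
    simp [hD] at hx
  constructor
  · rw [show ρ / j * (1 + A) = ρ * (1 + A) * j⁻¹ by ring]
    refine (((hu.const_add 1).const_mul ρ).mul hq).congr' ?_
    filter_upwards [hm] with x hx
    rw [hx]
    ring
  · rw [show ρ / j * (c + B) = ρ * (c + B) * j⁻¹ by ring]
    refine (((hv.const_add c).const_mul ρ).mul hq).congr' ?_
    filter_upwards [hn, hD] with x hx hx'
    rw [hx, one_sub_div hx']
    ring

/-- Unrolls `T_j = ρ / (j + 1) * (c (j + 1) + T_{j+1})`, `T_K = 0`. -/
noncomputable def tailSum (ρ : ℝ) (c : ℕ → ℝ) (K j : ℕ) : ℝ :=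
  j ! / ρ ^ j * ∑ l ∈ Finset.Ico (j + 1) (K + 1), ρ ^ l / l ! * c l

section tailSum

variable {ρ : ℝ} {c : ℕ → ℝ} {K j : ℕ}

theorem tailSum_of_le (h : K ≤ j) : tailSum ρ c K j = 0 := by
  rw [tailSum, Finset.Ico_eq_empty (by omega), Finset.sum_empty, mul_zero]

theorem tailSum_eq (hρ : ρ ≠ 0) (h : j < K) :
    tailSum ρ c K j = ρ / (j + 1) * (c (j + 1) + tailSum ρ c K (j + 1)) := by
  rw [tailSum, tailSum, Finset.sum_eq_sum_Ico_succ_bot (by omega), Nat.factorial_succ]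
  push_cast
  field_simp
  ring

theorem tailSum_nonneg (hρ : 0 ≤ ρ) (hc : ∀ l ≤ K, 0 ≤ c l) : 0 ≤ tailSum ρ c K j := by
  refine mul_nonneg (by positivity) (Finset.sum_nonneg fun l hl => ?_)
  exact mul_nonneg (by positivity) (hc l (by simp at hl; omega))

theorem tailSum_zero : tailSum ρ c K 0 = ∑ l ∈ Finset.Ico 1 (K + 1), ρ ^ l / l ! * c l := by
  simp [tailSum]

end tailSum

theorem one_add_tailSum_const_one {ρ : ℝ} {K : ℕ} :
    1 + tailSum ρ (fun _ => 1) K 0 = ∑ j ∈ Finset.range (K + 1), ρ ^ j / j ! := by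
  rw [tailSum_zero, Finset.sum_Ico_eq_sum_range, Finset.sum_range_succ']
  simp [add_comm]

noncomputable def tolerantRate (K : ℕ) (μt : ℝ) (l : ℕ) : ℝ :=
  ((K : ℝ) - l) * μt / K

theorem add_tailSum_tolerantRate {ρ μt : ℝ} {K : ℕ} (hK : K ≠ 0) :
    μt + tailSum ρ (tolerantRate K μt) K 0
      = (∑ j ∈ Finset.range K, ρ ^ j / j ! * (((K : ℝ) - j) / K)) * μt := by
  have hK' : (K : ℝ) ≠ 0 := by exact_mod_cast hK
  calc μt + tailSum ρ (tolerantRate K μt) K 0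
      = ∑ j ∈ Finset.range (K + 1), ρ ^ j / j ! * tolerantRate K μt j := by
        rw [tailSum_zero, Finset.sum_Ico_eq_sum_range, Finset.sum_range_succ']
        simp [tolerantRate, hK', add_comm]
    _ = ∑ j ∈ Finset.range K, ρ ^ j / j ! * tolerantRate K μt j := by
        simp [Finset.sum_range_succ, tolerantRate]
    _ = _ := by
        rw [Finset.sum_mul]
        refine Finset.sum_congr rfl fun j _ => ?_
        rw [tolerantRate]
        ring

theorem tolerantRate_nonneg {K : ℕ} {μt : ℝ} (hμt : 0 ≤ μt) {l : ℕ} (hl : l ≤ K) :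
    0 ≤ tolerantRate K μt l :=
  div_nonneg (mul_nonneg (sub_nonneg.2 (by exact_mod_cast hl)) hμt) K.cast_nonneg

theorem tendsto_tailSum_step {ρ : ℝ} (hρ : ρ ≠ 0) {c : ℕ → ℝ} {K j : ℕ} (hj : j < K)
    {u v mj nj : ℝ → ℝ}
    (hu : Tendsto u atTop (𝓝 (tailSum ρ (fun _ => 1) K (j + 1))))
    (hv : Tendsto v atTop (𝓝 (tailSum ρ c K (j + 1))))
    (hm : ∀ᶠ x in atTop, mj x = (1 + u x) / ((j + 1) * x + (c (j + 1) + v x)))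
    (hn : ∀ᶠ x in atTop, nj x = (j + 1) * x / ((j + 1) * x + (c (j + 1) + v x))) :
    Tendsto (fun x => mj x * (ρ * x)) atTop (𝓝 (tailSum ρ (fun _ => 1) K j)) ∧
      Tendsto (fun x => ρ * x * (1 - nj x)) atTop (𝓝 (tailSum ρ c K j)) := by
  rw [tailSum_eq hρ hj, tailSum_eq hρ hj]
  exact tendsto_backward_step (by positivity) hu hv hm hn

section CDCoefficients

variable {K : ℕ} {ρ μt : ℝ} {m n : ℝ → ℕ → ℝ}

theorem tendsto_cdCoeffs_pred (hK : 2 ≤ K) (hρ : ρ ≠ 0)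
    (hmK : ∀ μi : ℝ, 0 < μi → m μi K = 1 / gammaCD K μt μi K)
    (hmK1 : ∀ μi : ℝ, 0 < μi →
      m μi (K - 1) = (1 + m μi K * (ρ * μi)) / gammaCD K μt μi (K - 1))
    (hnK1 : ∀ μi : ℝ, 0 < μi →
      n μi (K - 1) = ((K : ℝ) - 1) * μi / gammaCD K μt μi (K - 1)) :
    Tendsto (fun x => m x (K - 1) * (ρ * x)) atTop (𝓝 (tailSum ρ (fun _ => 1) K (K - 2))) ∧
      Tendsto (fun x => ρ * x * (1 - n x (K - 1))) atTop
        (𝓝 (tailSum ρ (tolerantRate K μt) K (K - 2))) := by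
  obtain ⟨N, rfl⟩ := Nat.exists_eq_add_of_le' hK
  simp only [show N + 2 - 1 = N + 1 by omega, Nat.add_sub_cancel] at hmK1 hnK1 ⊢
  have hmK_lim : Tendsto (fun x => m x (N + 2) * (ρ * x)) atTop
      (𝓝 (tailSum ρ (fun _ => 1) (N + 2) (N + 1))) := by
    rw [tailSum_eq hρ (by omega), tailSum_of_le le_rfl]
    refine tendsto_const_nhds.congr' ?_
    filter_upwards [eventually_gt_atTop 0] with x hx
    rw [hmK x hx, gammaCD]
    field_simp
    push_cast
    ring
  have hV : tailSum ρ (tolerantRate (N + 2) μt) (N + 2) (N + 1) = 0 := by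
    rw [tailSum_eq hρ (by omega), tailSum_of_le le_rfl, tolerantRate]
    push_cast
    ring
  refine tendsto_tailSum_step hρ (j := N) (by omega) hmK_lim (v := fun _ => 0) ?_ ?_ ?_
  · rw [hV]
    exact tendsto_const_nhds
  · filter_upwards [eventually_gt_atTop 0] with x hx
    rw [hmK1 x hx, gammaCD, tolerantRate]
    push_cast
    ring
  · filter_upwards [eventually_gt_atTop 0] with x hx
    rw [hnK1 x hx, gammaCD, tolerantRate]
    push_cast
    ring

theorem tendsto_cdCoeffs (hK : 2 ≤ K) (hρ : ρ ≠ 0)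
    (hmK : ∀ μi : ℝ, 0 < μi → m μi K = 1 / gammaCD K μt μi K)
    (hmK1 : ∀ μi : ℝ, 0 < μi →
      m μi (K - 1) = (1 + m μi K * (ρ * μi)) / gammaCD K μt μi (K - 1))
    (hnK1 : ∀ μi : ℝ, 0 < μi →
      n μi (K - 1) = ((K : ℝ) - 1) * μi / gammaCD K μt μi (K - 1))
    (hrec : ∀ μi : ℝ, 0 < μi → ∀ i, 2 ≤ i → i ≤ K - 1 →
      m μi (K - i) = (1 + m μi (K - i + 1) * (ρ * μi))
          / (alphaCD K ρ μt μi (K - i) - n μi (K - i + 1) * (ρ * μi))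
      ∧ n μi (K - i) = ((K : ℝ) - (i : ℝ)) * μi
          / (alphaCD K ρ μt μi (K - i) - n μi (K - i + 1) * (ρ * μi)))
    {p : ℕ} (hp : p ≤ K - 2) :
    Tendsto (fun x => m x (p + 1) * (ρ * x)) atTop (𝓝 (tailSum ρ (fun _ => 1) K p)) ∧
      Tendsto (fun x => ρ * x * (1 - n x (p + 1))) atTop
        (𝓝 (tailSum ρ (tolerantRate K μt) K p)) := by
  induction hp using Nat.decreasingInduction with
  | self =>
    rw [show K - 2 + 1 = K - 1 by omega]
    exact tendsto_cdCoeffs_pred hK hρ hmK hmK1 hnK1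
  | of_succ k hk ih =>
    have hD : ∀ x, alphaCD K ρ μt x (k + 1) - n x (k + 1 + 1) * (ρ * x)
        = ((k : ℝ) + 1) * x + (tolerantRate K μt (k + 1) + ρ * x * (1 - n x (k + 2))) := by
      intro x
      rw [alphaCD, tolerantRate]
      push_cast
      ring
    have hstep : ∀ x, 0 < x →
        m x (k + 1) = (1 + m x (k + 2) * (ρ * x))
          / (((k : ℝ) + 1) * x + (tolerantRate K μt (k + 1) + ρ * x * (1 - n x (k + 2)))) ∧
        n x (k + 1) = ((k : ℝ) + 1) * x
          / (((k : ℝ) + 1) * x + (tolerantRate K μt (k + 1) + ρ * x * (1 - n x (k + 2)))) := by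
      intro x hx
      obtain ⟨hm, hn⟩ := hrec x hx (K - (k + 1)) (by omega) (by omega)
      rw [Nat.sub_sub_self (by omega : k + 1 ≤ K), hD] at hm hn
      refine ⟨hm, ?_⟩
      rw [hn, Nat.cast_sub (by omega : k + 1 ≤ K)]
      push_cast
      ring
    exact tendsto_tailSum_step hρ (by omega) ih.1 ih.2
      ((eventually_gt_atTop 0).mono fun x hx => (hstep x hx).1)
      ((eventually_gt_atTop 0).mono fun x hx => (hstep x hx).2)

end CDCoefficients

/-- In the SFJ limit `μᵢ → ∞` (with `ρ` fixed), the first moment of the CD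
effective server time, `E[Υ̌₀] = (1 + m₁λ̃)/(λ̃ + μ_t − n₁λ̃)`, converges to
`ǎ₀/(η·μ_t)`. -/
theorem cd_est_first_moment_limit
    (K : ℕ) (hK : 2 ≤ K) (ρ μt : ℝ) (hρ : 0 < ρ) (hmut : 0 < μt)
    (m n : ℝ → ℕ → ℝ)
    (hmK : ∀ μi : ℝ, 0 < μi → m μi K = 1 / gammaCD K μt μi K)
    (hmK1 : ∀ μi : ℝ, 0 < μi →
      m μi (K - 1) = (1 + m μi K * (ρ * μi)) / gammaCD K μt μi (K - 1))
    (hnK1 : ∀ μi : ℝ, 0 < μi →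
      n μi (K - 1) = ((K : ℝ) - 1) * μi / gammaCD K μt μi (K - 1))
    (hrec : ∀ μi : ℝ, 0 < μi → ∀ i, 2 ≤ i → i ≤ K - 1 →
      m μi (K - i) = (1 + m μi (K - i + 1) * (ρ * μi))
          / (alphaCD K ρ μt μi (K - i) - n μi (K - i + 1) * (ρ * μi))
      ∧ n μi (K - i) = ((K : ℝ) - (i : ℝ)) * μi
          / (alphaCD K ρ μt μi (K - i) - n μi (K - i + 1) * (ρ * μi))) :
    Tendsto (fun μi => (1 + m μi 1 * (ρ * μi)) / (ρ * μi + μt - n μi 1 * (ρ * μi)))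
      atTop
      (nhds ((∑ j ∈ Finset.range (K + 1), ρ ^ j / (Nat.factorial j : ℝ))
        / ((∑ j ∈ Finset.range K, (ρ ^ j / (Nat.factorial j : ℝ)) * (((K : ℝ) - j) / K))
            * μt))) := by
  obtain ⟨hm1, hn1⟩ := tendsto_cdCoeffs hK hρ.ne' hmK hmK1 hnK1 hrec (Nat.zero_le _)
  have hden : 0 < μt + tailSum ρ (tolerantRate K μt) K 0 :=
    add_pos_of_pos_of_nonneg hmut (tailSum_nonneg hρ.le fun l => tolerantRate_nonneg hmut.le)
  rw [← one_add_tailSum_const_one, ← add_tailSum_tolerantRate (by omega)]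
  refine ((hm1.const_add 1).div (hn1.const_add μt) hden.ne').congr fun x => ?_
  rw [Pi.div_apply, zero_add]
  congr 1
  ring
end

section
/- In the setting of the CD effective-server-time recursions (K ≥ 2, ρ > 0, μ_t > 0, λ̃ = ρ·μ_i, with m_i, n_i, α_i, γ_i defined as in the first-moment recursion), define further for each μ_i > 0: E_0 = (1 + m_1·λ̃)/(λ̃ + μ_t − n_1·λ̃) and E_l = m_l + n_l·E_{l−1} for 1 ≤ l ≤ K−1 (with n_K := 1, E_K = m_K + E_{K−1}); δ_K = γ_K; σ_K = (2δ_K/α_K)·E_{K−1} + (2λ̃/α_K)·E_K; r_K = 2/(δ_K·α_K) + σ_K/δ_K; and for i = 1, ..., K−1 (decreasing index): δ_{K−i} = (α_{K−i}·δ_{K−i+1} − λ̃·(K−i+1)·μ_i)/δ_{K−i+1}, σ_{K−i} = (2λ̃/α_{K−i})·E_{K−i+1} + (2(K−i)·μ_i/α_{K−i})·E_{K−i−1}, r_{K−i} = (1/δ_{K−i})·(2/α_{K−i} + λ̃·r_{K−i+1} + σ_{K−i}); finally δ_0 = (α_0·δ_1 − λ̃·μ_i)/δ_1 and M_2 = (1/δ_0)·(2/α_0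 + λ̃·r_1 + 2λ̃·E_1/α_0). Then, as μ_i → ∞ (with ρ fixed), the second moment M_2 = E[(Υ̌_0)²] converges to 2·ǎ_0²/(η²·μ_t²), where ǎ_0 = Σ_{j=0}^{K} ρ^j/j! and η = Σ_{j=0}^{K−1} (ρ^j/j!)·(K−j)/K. -/
/-!
As `μᵢ → ∞`, every quantity of level `j` (the number of impatient customers) splits into a part of
order `j μᵢ` and a bounded remainder. Each recursion takes the form
`g_j = c_j + ρ (μᵢ / δ_{j+1}) g_{j+1}` with `μᵢ / δ_{j+1} → 1 / (j + 1)` and `c_j → C_j`, so the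
limits obey `L_j = C_j + ρ / (j + 1) · L_{j+1}`, solved by the normalised Poisson tail
`∑_{v ≥ j} (ρ^v / v!) C_v / (ρ^j / j!)`. Applied to `δ_j - j μᵢ` this gives `δ₀ → μ_t η`.
The denominators of the `m`- and `n`-recursions are exactly the `δ_j`, so `n_j = j μᵢ / δ_j → 1`,
and applied to `m_j δ_j` it gives `E₀ → ǎ₀ / (μ_t η) =: a`, hence `E_l → a` for every `l`. The
forcing terms of the `r`-recursion then tend to `2a`, and at `j = 0` this yields
`M₂ → 2a · ǎ₀ / (μ_t η) = 2 ǎ₀² / (η² μ_t²)`.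
-/

open Filter

open Finset Topology
open scoped Nat

noncomputable def poissonTailRatio (K : ℕ) (ρ : ℝ) (h : ℕ → ℝ) (j : ℕ) : ℝ :=
  (∑ v ∈ Ico j (K + 1), ρ ^ v / v ! * h v) / (ρ ^ j / j !)

section PoissonTailRatio

variable {K : ℕ} {ρ : ℝ} (h : ℕ → ℝ)

theorem poissonTailRatio_self (hρ : ρ ≠ 0) : poissonTailRatio K ρ h K = h K := by
  have : ρ ^ K / K ! ≠ 0 := by positivity
  rw [poissonTailRatio, Nat.Ico_succ_singleton, sum_singleton, mul_div_cancel_left₀ _ this]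

theorem poissonTailRatio_of_lt (hρ : ρ ≠ 0) {j : ℕ} (hj : j < K) :
    poissonTailRatio K ρ h j = h j + ρ / (j + 1) * poissonTailRatio K ρ h (j + 1) := by
  rw [poissonTailRatio, poissonTailRatio, sum_eq_sum_Ico_succ_bot (by omega),
    pow_succ, Nat.factorial_succ]
  push_cast
  field_simp

theorem poissonTailRatio_zero :
    poissonTailRatio K ρ h 0 = ∑ v ∈ range (K + 1), ρ ^ v / v ! * h v := by
  rw [poissonTailRatio, range_eq_Ico, pow_zero, Nat.factorial_zero, Nat.cast_one, div_one, div_one]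

theorem poissonTailRatio_zero_const (c : ℝ) :
    poissonTailRatio K ρ (fun _ => c) 0 = (∑ v ∈ range (K + 1), ρ ^ v / v !) * c := by
  rw [poissonTailRatio_zero, sum_mul]

theorem poissonTailRatio_zero_sub_mul_div (μ : ℝ) :
    poissonTailRatio K ρ (fun v => (K - v) * μ / K) 0
      = μ * ∑ v ∈ range K, ρ ^ v / v ! * ((K - v) / K) := by
  rw [poissonTailRatio_zero, sum_range_succ, sub_self, zero_mul, zero_div, mul_zero, add_zero,
    mul_sum]
  exact sum_congr rfl fun _ _ => by ring

theorem sum_range_mul_sub_div_pos (hK : 0 < K) (hρ : 0 < ρ) :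
    0 < ∑ v ∈ range K, ρ ^ v / v ! * ((K - v) / K) := by
  refine sum_pos (fun v hv => ?_) ⟨0, mem_range.mpr hK⟩
  have : (v : ℝ) < K := by exact_mod_cast mem_range.mp hv
  have : (0 : ℝ) < K - v := by linarith
  positivity

end PoissonTailRatio

theorem tendsto_id_div_of_tendsto_sub_mul {f : ℝ → ℝ} {c e : ℝ} (hc : c ≠ 0)
    (hf : Tendsto (fun x => f x - c * x) atTop (𝓝 e)) :
    Tendsto (fun x => x / f x) atTop (𝓝 c⁻¹) := by
  have hratio : Tendsto (fun x => f x / x) atTop (𝓝 c) := by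
    have := (hf.div_atTop tendsto_id).add_const c
    rw [zero_add] at this
    refine this.congr' ?_
    filter_upwards [eventually_ne_atTop 0] with x hx
    simp only [id]
    field_simp
    ring
  simpa only [Pi.inv_apply, inv_div] using hratio.inv₀ hc

theorem tendsto_div_of_tendsto_mul {α : Type*} {l : Filter α} {f δ : α → ℝ} {L e : ℝ}
    (hf : Tendsto (fun x => f x * δ x) l (𝓝 L)) (hδ : Tendsto δ l (𝓝 e)) (he : e ≠ 0) :
    Tendsto f l (𝓝 (L / e)) :=
  (hf.div hδ he).congr' <| by
    filter_upwards [hδ.eventually_ne he] with x hx using mul_div_cancel_right₀ _ hx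

theorem tendsto_zero_of_tendsto_mul {f δ : ℝ → ℝ} {L w : ℝ}
    (hf : Tendsto (fun x => f x * δ x) atTop (𝓝 L))
    (hδ : Tendsto (fun x => x / δ x) atTop (𝓝 w)) (hw : w ≠ 0) :
    Tendsto f atTop (𝓝 0) := by
  have := (hf.mul hδ).mul tendsto_inv_atTop_zero
  rw [mul_zero] at this
  refine this.congr' ?_
  filter_upwards [hδ.eventually_ne hw, eventually_ne_atTop 0] with x hδx hx
  have := (div_ne_zero_iff.mp hδx).2
  field_simp

/-- The weights need only converge once `g (j + 1)` does, which lets `δ` drive its own recursion. -/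
theorem tendsto_poissonTailRatio_of_recursion {K : ℕ} {ρ : ℝ} (hρ : ρ ≠ 0)
    {g c w : ℝ → ℕ → ℝ} {C : ℕ → ℝ}
    (hK : Tendsto (g · K) atTop (𝓝 (C K)))
    (hc : ∀ j < K, Tendsto (c · j) atTop (𝓝 (C j)))
    (hw : ∀ j < K, Tendsto (g · (j + 1)) atTop (𝓝 (poissonTailRatio K ρ C (j + 1))) →
      Tendsto (w · (j + 1)) atTop (𝓝 ((j : ℝ) + 1)⁻¹))
    (hrec : ∀ j < K, ∀ᶠ x in atTop, g x j = c x j + ρ * w x (j + 1) * g x (j + 1)) :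
    ∀ j ≤ K, Tendsto (g · j) atTop (𝓝 (poissonTailRatio K ρ C j)) := by
  intro j hj
  induction hj using Nat.decreasingInduction with
  | self => rwa [poissonTailRatio_self C hρ]
  | of_succ j hj ih =>
    have := (hc j hj).add (((hw j hj ih).const_mul ρ).mul ih)
    rw [poissonTailRatio_of_lt C hρ hj, div_eq_mul_inv]
    exact this.congr' (by filter_upwards [hrec j hj] with x hx using hx.symm)

theorem tendsto_mul_delta_of_recursion {K : ℕ} {ρ : ℝ} (hρ : ρ ≠ 0)
    {δ f c : ℝ → ℕ → ℝ} {C : ℕ → ℝ}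
    (hδ : ∀ j, 1 ≤ j → j ≤ K → Tendsto (fun x => x / δ x j) atTop (𝓝 (j : ℝ)⁻¹))
    (hK : Tendsto (fun x => f x K * δ x K) atTop (𝓝 (C K)))
    (hc : ∀ j < K, Tendsto (c · j) atTop (𝓝 (C j)))
    (hrec : ∀ j < K, ∀ᶠ x in atTop, f x j * δ x j = c x j + ρ * x * f x (j + 1)) :
    ∀ j ≤ K, Tendsto (fun x => f x j * δ x j) atTop (𝓝 (poissonTailRatio K ρ C j)) := by
  have hw : ∀ j < K, Tendsto (fun x => x / δ x (j + 1)) atTop (𝓝 ((j : ℝ) + 1)⁻¹) := by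
    intro j hj
    exact_mod_cast hδ (j + 1) (by omega) hj
  refine tendsto_poissonTailRatio_of_recursion hρ (w := fun x j => x / δ x j) hK hc
    (fun j hj _ => hw j hj) fun j hj => ?_
  filter_upwards [hrec j hj, (hw j hj).eventually_ne (by positivity)] with x hx hδx
  have := (div_ne_zero_iff.mp hδx).2
  rw [hx]
  field_simp

theorem gammaCD_self (K : ℕ) (μt x : ℝ) : gammaCD K μt x K = K * x := by
  simp [gammaCD]

theorem alphaCD_eq_add_gammaCD (K : ℕ) (ρ μt x : ℝ) (j : ℕ) :
    alphaCD K ρ μt x j = ρ * x + gammaCD K μt x j := by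
  unfold alphaCD gammaCD
  ring

theorem mul_le_gammaCD {K j : ℕ} {μt : ℝ} (hμt : 0 ≤ μt) (hj : j ≤ K) (x : ℝ) :
    j * x ≤ gammaCD K μt x j := by
  have : (0 : ℝ) ≤ K - j := sub_nonneg.mpr (by exact_mod_cast hj)
  have : 0 ≤ (K - j) * μt / K := by positivity
  unfold gammaCD
  linarith

theorem gammaCD_pos {K : ℕ} {μt x : ℝ} (hK : 0 < K) (hμt : 0 < μt) (hx : 0 < x) {j : ℕ}
    (hj : j ≤ K) : 0 < gammaCD K μt x j := by
  have hKj : (0 : ℝ) ≤ K - j := sub_nonneg.mpr (by exact_mod_cast hj)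
  rcases Nat.eq_zero_or_pos j with rfl | hj0
  · simpa [gammaCD, hK.ne'] using hμt
  · unfold gammaCD
    have : (0 : ℝ) < j := by exact_mod_cast hj0
    positivity

structure IsDeltaRecursion (K : ℕ) (ρ μt : ℝ) (δ : ℝ → ℕ → ℝ) : Prop where
  self : ∀ x, 0 < x → δ x K = K * x
  succ : ∀ x, 0 < x → ∀ j < K,
    δ x j = (alphaCD K ρ μt x j * δ x (j + 1) - ρ * x * (j + 1) * x) / δ x (j + 1)

namespace IsDeltaRecursion

variable {K : ℕ} {ρ μt x : ℝ} {δ : ℝ → ℕ → ℝ}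

theorem gammaCD_le (h : IsDeltaRecursion K ρ μt δ) (hρ : 0 ≤ ρ) (hμt : 0 ≤ μt) (hx : 0 < x) :
    ∀ j ≤ K, gammaCD K μt x j ≤ δ x j := by
  intro j hj
  induction hj using Nat.decreasingInduction with
  | self => rw [h.self x hx, gammaCD_self]
  | of_succ j hj ih =>
    have hjx : ((j : ℝ) + 1) * x ≤ δ x (j + 1) := by
      exact_mod_cast (mul_le_gammaCD hμt hj x).trans ih
    have hpos : 0 < δ x (j + 1) := lt_of_lt_of_le (by positivity) hjx
    rw [h.succ x hx j hj, le_div_iff₀ hpos, alphaCD_eq_add_gammaCD]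
    nlinarith [mul_nonneg (mul_nonneg hρ hx.le) (sub_nonneg.mpr hjx)]

theorem pos (h : IsDeltaRecursion K ρ μt δ) (hK : 0 < K) (hρ : 0 ≤ ρ) (hμt : 0 < μt)
    (hx : 0 < x) {j : ℕ} (hj : j ≤ K) : 0 < δ x j :=
  (gammaCD_pos hK hμt hx hj).trans_le (h.gammaCD_le hρ hμt.le hx j hj)

theorem gammaCD_pred_eq (h : IsDeltaRecursion K ρ μt δ) (hK : 0 < K) (hx : 0 < x) :
    gammaCD K μt x (K - 1) = δ x (K - 1) := by
  have := h.succ x hx (K - 1) (by omega)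
  rw [Nat.sub_add_cancel hK, h.self x hx, Nat.cast_pred hK] at this
  rw [this, alphaCD_eq_add_gammaCD]
  have : (K : ℝ) ≠ 0 := by positivity
  field_simp
  ring

theorem alphaCD_sub_eq (h : IsDeltaRecursion K ρ μt δ) (hx : 0 < x) {j : ℕ} (hj : j < K)
    (hne : δ x (j + 1) ≠ 0) :
    alphaCD K ρ μt x j - ((j + 1 : ℕ) : ℝ) * x / δ x (j + 1) * (ρ * x) = δ x j := by
  rw [h.succ x hx j hj]
  field_simp
  push_cast
  ring

theorem tendsto_sub_mul (h : IsDeltaRecursion K ρ μt δ) (hK : 0 < K) (hρ : 0 < ρ)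
    (hμt : 0 < μt) :
    ∀ j ≤ K, Tendsto (fun x => δ x j - j * x) atTop
      (𝓝 (poissonTailRatio K ρ (fun v => (K - v) * μt / K) j)) := by
  refine tendsto_poissonTailRatio_of_recursion hρ.ne' (c := fun _ j => (K - j) * μt / K)
    (w := fun x j => x / δ x j) ?_ (fun _ _ => tendsto_const_nhds) ?_ ?_
  · rw [sub_self, zero_mul, zero_div]
    refine tendsto_const_nhds.congr' ?_
    filter_upwards [eventually_gt_atTop 0] with x hx
    rw [h.self x hx, sub_self]
  · intro j _ hg
    exact_mod_cast tendsto_id_div_of_tendsto_sub_mul (by positivity) hg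
  · intro j hj
    filter_upwards [eventually_gt_atTop 0] with x hx
    have := h.pos hK hρ.le hμt hx (Nat.succ_le_of_lt hj)
    rw [h.succ x hx j hj, alphaCD]
    field_simp
    push_cast
    ring

theorem tendsto_id_div (h : IsDeltaRecursion K ρ μt δ) (hK : 0 < K) (hρ : 0 < ρ)
    (hμt : 0 < μt) {j : ℕ} (hj : 1 ≤ j) (hjK : j ≤ K) :
    Tendsto (fun x => x / δ x j) atTop (𝓝 (j : ℝ)⁻¹) :=
  tendsto_id_div_of_tendsto_sub_mul (by positivity) (h.tendsto_sub_mul hK hρ hμt j hjK)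

theorem tendsto_zero (h : IsDeltaRecursion K ρ μt δ) (hK : 0 < K) (hρ : 0 < ρ) (hμt : 0 < μt) :
    Tendsto (δ · 0) atTop (𝓝 (μt * ∑ v ∈ range K, ρ ^ v / v ! * ((K - v) / K))) := by
  simpa [poissonTailRatio_zero_sub_mul_div] using h.tendsto_sub_mul hK hρ hμt 0 K.zero_le

end IsDeltaRecursion

theorem tendsto_alphaCD_forcing {K : ℕ} {ρ μt : ℝ} (hρ : 0 < ρ) (j : ℕ) {E₁ E₂ : ℝ → ℝ} {a : ℝ}
    (h₁ : Tendsto E₁ atTop (𝓝 a)) (h₂ : Tendsto E₂ atTop (𝓝 a)) :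
    Tendsto (fun x => 2 / alphaCD K ρ μt x j + 2 * (ρ * x) / alphaCD K ρ μt x j * E₁ x
      + 2 * j * x / alphaCD K ρ μt x j * E₂ x) atTop (𝓝 (2 * a)) := by
  have hρj : ρ + j ≠ 0 := by positivity
  have hα : Tendsto (fun x => x / alphaCD K ρ μt x j) atTop (𝓝 (ρ + j)⁻¹) := by
    refine tendsto_id_div_of_tendsto_sub_mul hρj (e := (K - j) * μt / K) ?_
    refine tendsto_const_nhds.congr fun x => ?_
    unfold alphaCD
    ring
  have := (((hα.const_mul 2).mul tendsto_inv_atTop_zero).add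
    (((hα.const_mul (2 * ρ)).mul h₁))).add ((hα.const_mul (2 * (j : ℝ))).mul h₂)
  convert this.congr' ?_ using 2
  · field_simp
    ring
  · filter_upwards [eventually_ne_atTop 0] with x hx
    field_simp

section CDRecursion

variable {K : ℕ} {ρ μt : ℝ} {m n E δ σ r : ℝ → ℕ → ℝ}

theorem isDeltaRecursion_of_sub_index
    (hdK : ∀ μi : ℝ, 0 < μi → δ μi K = gammaCD K μt μi K)
    (hδ : ∀ μi : ℝ, 0 < μi → ∀ i, 1 ≤ i → i ≤ K - 1 →
      δ μi (K - i) = (alphaCD K ρ μt μi (K - i) * δ μi (K - i + 1)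
          - (ρ * μi) * (((K : ℝ) - i) + 1) * μi) / δ μi (K - i + 1))
    (hd0 : ∀ μi : ℝ, 0 < μi →
      δ μi 0 = (alphaCD K ρ μt μi 0 * δ μi 1 - (ρ * μi) * μi) / δ μi 1) :
    IsDeltaRecursion K ρ μt δ where
  self x hx := by rw [hdK x hx, gammaCD_self]
  succ x hx j hj := by
    rcases Nat.eq_zero_or_pos j with rfl | hj0
    · rw [hd0 x hx]
      norm_num
    · have := hδ x hx (K - j) (by omega) (by omega)
      rwa [Nat.sub_sub_self hj.le, Nat.cast_sub hj.le, sub_sub_cancel] at this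

theorem n_eq_mul_div_delta (hK : 0 < K) (hδ : IsDeltaRecursion K ρ μt δ)
    (hpos : ∀ x, 0 < x → ∀ j ≤ K, 0 < δ x j)
    (hnK1 : ∀ μi : ℝ, 0 < μi →
      n μi (K - 1) = ((K : ℝ) - 1) * μi / gammaCD K μt μi (K - 1))
    (hn : ∀ μi : ℝ, 0 < μi → ∀ i, 2 ≤ i → i ≤ K - 1 →
      n μi (K - i) = ((K : ℝ) - (i : ℝ)) * μi
          / (alphaCD K ρ μt μi (K - i) - n μi (K - i + 1) * (ρ * μi)))
    {x : ℝ} (hx : 0 < x) : ∀ j, 1 ≤ j → j < K → n x j = j * x / δ x j := by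
  suffices ∀ j ≤ K - 1, 1 ≤ j → n x j = j * x / δ x j from
    fun j hj hjK => this j (by omega) hj
  intro j hj
  induction hj using Nat.decreasingInduction with
  | self => intro; rw [hnK1 x hx, hδ.gammaCD_pred_eq hK hx, Nat.cast_pred hK]
  | of_succ j hj ih =>
    intro hj1
    have := hn x hx (K - j) (by omega) (by omega)
    rwa [Nat.sub_sub_self (by omega), Nat.cast_sub (by omega), sub_sub_cancel,
      ih (by omega), hδ.alphaCD_sub_eq hx (by omega) (hpos x hx _ (by omega)).ne'] at this

theorem m_mul_delta_eq (hK : 2 ≤ K) (hδ : IsDeltaRecursion K ρ μt δ)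
    (hpos : ∀ x, 0 < x → ∀ j ≤ K, 0 < δ x j)
    (hn : ∀ x, 0 < x → ∀ j, 1 ≤ j → j < K → n x j = j * x / δ x j)
    (hmK1 : ∀ μi : ℝ, 0 < μi →
      m μi (K - 1) = (1 + m μi K * (ρ * μi)) / gammaCD K μt μi (K - 1))
    (hm : ∀ μi : ℝ, 0 < μi → ∀ i, 2 ≤ i → i ≤ K - 1 →
      m μi (K - i) = (1 + m μi (K - i + 1) * (ρ * μi))
          / (alphaCD K ρ μt μi (K - i) - n μi (K - i + 1) * (ρ * μi)))
    (hE0 : ∀ μi : ℝ, 0 < μi →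
      E μi 0 = (1 + m μi 1 * (ρ * μi)) / (ρ * μi + μt - n μi 1 * (ρ * μi)))
    {x : ℝ} (hx : 0 < x) :
    ∀ j < K, (if j = 0 then E x 0 else m x j) * δ x j = 1 + ρ * x * m x (j + 1) := by
  intro j hj
  have hδj := (hpos x hx j hj.le).ne'
  rcases j with _ | j
  · have hα : alphaCD K ρ μt x 0 = ρ * x + μt := by
      simp [alphaCD, show (K : ℝ) ≠ 0 by positivity]
    rw [if_pos rfl, hE0 x hx, hn x hx 1 le_rfl (by omega), ← hα,
      hδ.alphaCD_sub_eq hx hj (hpos x hx 1 (by omega)).ne', div_mul_cancel₀ _ hδj]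
    ring
  rw [if_neg j.succ_ne_zero]
  rcases (show j + 1 = K - 1 ∨ j + 2 < K by omega) with hjK | hjK
  · rw [hjK, hmK1 x hx, hδ.gammaCD_pred_eq (by omega) hx, div_mul_cancel₀ _ (by rwa [hjK] at hδj),
      Nat.sub_add_cancel (by omega)]
    ring
  · have := hm x hx (K - (j + 1)) (by omega) (by omega)
    rw [Nat.sub_sub_self (by omega), hn x hx (j + 2) (by omega) hjK,
      hδ.alphaCD_sub_eq hx (by omega) (hpos x hx _ (by omega)).ne'] at this
    rw [this, div_mul_cancel₀ _ hδj]
    ring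

theorem m_mul_delta_self (hK : 0 < K) (hδ : IsDeltaRecursion K ρ μt δ)
    (hmK : ∀ μi : ℝ, 0 < μi → m μi K = 1 / gammaCD K μt μi K) {x : ℝ} (hx : 0 < x) :
    m x K * δ x K = 1 := by
  rw [hmK x hx, hδ.self x hx, gammaCD_self]
  exact one_div_mul_cancel (by positivity)

theorem r_mul_delta_eq (hpos : ∀ x, 0 < x → ∀ j ≤ K, 0 < δ x j)
    (hrec2 : ∀ μi : ℝ, 0 < μi → ∀ i, 1 ≤ i → i ≤ K - 1 →
      σ μi (K - i) = (2 * (ρ * μi) / alphaCD K ρ μt μi (K - i)) * E μi (K - i + 1)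
          + (2 * ((K : ℝ) - i) * μi / alphaCD K ρ μt μi (K - i)) * E μi (K - i - 1)
      ∧ r μi (K - i) = (1 / δ μi (K - i))
          * (2 / alphaCD K ρ μt μi (K - i) + (ρ * μi) * r μi (K - i + 1) + σ μi (K - i)))
    {x : ℝ} (hx : 0 < x) :
    ∀ j < K, (if j = 0 then (1 / δ x 0) * (2 / alphaCD K ρ μt x 0 + (ρ * x) * r x 1
        + 2 * (ρ * x) * E x 1 / alphaCD K ρ μt x 0) else r x j) * δ x j
      = 2 / alphaCD K ρ μt x j + 2 * (ρ * x) / alphaCD K ρ μt x j * E x (j + 1)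
        + 2 * j * x / alphaCD K ρ μt x j * E x (j - 1) + ρ * x * r x (j + 1) := by
  intro j hj
  have hδj := (hpos x hx j hj.le).ne'
  rcases j with _ | j
  · rw [if_pos rfl]
    field_simp
    ring
  obtain ⟨hσ, hr⟩ := hrec2 x hx (K - (j + 1)) (by omega) (by omega)
  rw [Nat.sub_sub_self hj.le] at hσ hr
  rw [Nat.cast_sub hj.le, sub_sub_cancel] at hσ
  rw [if_neg j.succ_ne_zero, hr, hσ]
  field_simp
  ring

theorem r_mul_delta_self (hδ : IsDeltaRecursion K ρ μt δ)
    (hpos : ∀ x, 0 < x → ∀ j ≤ K, 0 < δ x j)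
    (hsK : ∀ μi : ℝ, 0 < μi →
      σ μi K = (2 * δ μi K / alphaCD K ρ μt μi K) * E μi (K - 1)
        + (2 * (ρ * μi) / alphaCD K ρ μt μi K) * E μi K)
    (hrK : ∀ μi : ℝ, 0 < μi →
      r μi K = 2 / (δ μi K * alphaCD K ρ μt μi K) + σ μi K / δ μi K)
    {x : ℝ} (hx : 0 < x) :
    r x K * δ x K = 2 / alphaCD K ρ μt x K + 2 * (ρ * x) / alphaCD K ρ μt x K * E x K
        + 2 * K * x / alphaCD K ρ μt x K * E x (K - 1) := by
  have := (hpos x hx K le_rfl).ne'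
  rw [hrK x hx, hsK x hx]
  field_simp
  rw [hδ.self x hx]
  ring

theorem tendsto_E_of_tendsto_mul_delta {a : ℝ} {L : ℕ → ℝ}
    (hw : ∀ j, 1 ≤ j → j ≤ K → Tendsto (fun x => x / δ x j) atTop (𝓝 (j : ℝ)⁻¹))
    (hmδ : ∀ j, 1 ≤ j → j ≤ K → Tendsto (fun x => m x j * δ x j) atTop (𝓝 (L j)))
    (hnδ : ∀ x, 0 < x → ∀ j, 1 ≤ j → j < K → n x j = j * x / δ x j)
    (hEl : ∀ μi : ℝ, 0 < μi → ∀ l, 1 ≤ l → l ≤ K - 1 →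
      E μi l = m μi l + n μi l * E μi (l - 1))
    (hEK : ∀ μi : ℝ, 0 < μi → E μi K = m μi K + E μi (K - 1))
    (hE0 : Tendsto (E · 0) atTop (𝓝 a)) :
    ∀ l ≤ K, Tendsto (E · l) atTop (𝓝 a) := by
  have hm : ∀ l, 1 ≤ l → l ≤ K → Tendsto (m · l) atTop (𝓝 0) := fun l hl hlK =>
    tendsto_zero_of_tendsto_mul (hmδ l hl hlK) (hw l hl hlK) (by positivity)
  have hn : ∀ l, 1 ≤ l → l < K → Tendsto (n · l) atTop (𝓝 1) := by
    intro l hl hlK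
    have := (hw l hl hlK.le).const_mul (l : ℝ)
    rw [mul_inv_cancel₀ (by positivity)] at this
    refine this.congr' ?_
    filter_upwards [eventually_gt_atTop 0] with x hx
    rw [hnδ x hx l hl hlK, mul_div_assoc]
  intro l hl
  induction l with
  | zero => exact hE0
  | succ l ih =>
    have hEl' := ih (by omega)
    rcases (show l + 1 < K ∨ l + 1 = K by omega) with hlK | rfl
    · have := (hm (l + 1) (by omega) hl).add ((hn (l + 1) (by omega) hlK).mul hEl')
      rw [zero_add, one_mul] at this
      refine this.congr' ?_
      filter_upwards [eventually_gt_atTop 0] with x hx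
      exact (hEl x hx (l + 1) (by omega) (by omega)).symm
    · have := (hm (l + 1) (by omega) hl).add hEl'
      rw [zero_add] at this
      refine this.congr' ?_
      filter_upwards [eventually_gt_atTop 0] with x hx
      exact (hEK x hx).symm

theorem tendsto_E (hK : 2 ≤ K) (hρ : 0 < ρ) (hμt : 0 < μt) (hδ : IsDeltaRecursion K ρ μt δ)
    (hmK : ∀ μi : ℝ, 0 < μi → m μi K = 1 / gammaCD K μt μi K)
    (hmK1 : ∀ μi : ℝ, 0 < μi →
      m μi (K - 1) = (1 + m μi K * (ρ * μi)) / gammaCD K μt μi (K - 1))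
    (hnK1 : ∀ μi : ℝ, 0 < μi →
      n μi (K - 1) = ((K : ℝ) - 1) * μi / gammaCD K μt μi (K - 1))
    (hrec : ∀ μi : ℝ, 0 < μi → ∀ i, 2 ≤ i → i ≤ K - 1 →
      m μi (K - i) = (1 + m μi (K - i + 1) * (ρ * μi))
          / (alphaCD K ρ μt μi (K - i) - n μi (K - i + 1) * (ρ * μi))
      ∧ n μi (K - i) = ((K : ℝ) - (i : ℝ)) * μi
          / (alphaCD K ρ μt μi (K - i) - n μi (K - i + 1) * (ρ * μi)))
    (hE0 : ∀ μi : ℝ, 0 < μi →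
      E μi 0 = (1 + m μi 1 * (ρ * μi)) / (ρ * μi + μt - n μi 1 * (ρ * μi)))
    (hEl : ∀ μi : ℝ, 0 < μi → ∀ l, 1 ≤ l → l ≤ K - 1 →
      E μi l = m μi l + n μi l * E μi (l - 1))
    (hEK : ∀ μi : ℝ, 0 < μi → E μi K = m μi K + E μi (K - 1)) :
    ∀ l ≤ K, Tendsto (E · l) atTop (𝓝 ((∑ v ∈ range (K + 1), ρ ^ v / v !)
      / (μt * ∑ v ∈ range K, ρ ^ v / v ! * ((K - v) / K)))) := by
  have hK0 : 0 < K := by omega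
  have hpos : ∀ x, 0 < x → ∀ j ≤ K, 0 < δ x j := fun x hx _ => hδ.pos hK0 hρ.le hμt hx
  have hw := fun j => hδ.tendsto_id_div hK0 hρ hμt (j := j)
  have hnδ : ∀ x, 0 < x → ∀ j, 1 ≤ j → j < K → n x j = j * x / δ x j := fun x hx =>
    n_eq_mul_div_delta hK0 hδ hpos hnK1 (fun x hx i hi hiK => (hrec x hx i hi hiK).2) hx
  -- `E₀` continues the `m`-recursion to `j = 0`.
  have hmE := tendsto_mul_delta_of_recursion hρ.ne' hw (C := fun _ => 1)
    (f := fun x j => if j = 0 then E x 0 else m x j)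
    (tendsto_const_nhds.congr' <| (eventually_gt_atTop 0).mono fun x hx => by
      dsimp only
      rw [if_neg hK0.ne', m_mul_delta_self hK0 hδ hmK hx])
    (fun _ _ => tendsto_const_nhds) fun j hj => (eventually_gt_atTop 0).mono fun x hx =>
      m_mul_delta_eq hK hδ hpos hnδ hmK1 (fun x hx i hi hiK => (hrec x hx i hi hiK).1) hE0 hx j hj
  have hE0 := tendsto_div_of_tendsto_mul (by simpa only [↓reduceIte] using hmE 0 K.zero_le)
    (hδ.tendsto_zero hK0 hρ hμt) (by have := sum_range_mul_sub_div_pos hK0 hρ; positivity)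
  rw [poissonTailRatio_zero_const, mul_one] at hE0
  exact tendsto_E_of_tendsto_mul_delta hw
    (fun j hj hjK => by simpa [show j ≠ 0 by omega] using hmE j hjK) hnδ hEl hEK hE0

theorem tendsto_second_moment (hK : 2 ≤ K) (hρ : 0 < ρ) (hμt : 0 < μt)
    (hδ : IsDeltaRecursion K ρ μt δ) {a : ℝ} (hE : ∀ l ≤ K, Tendsto (E · l) atTop (𝓝 a))
    (hsK : ∀ μi : ℝ, 0 < μi →
      σ μi K = (2 * δ μi K / alphaCD K ρ μt μi K) * E μi (K - 1)
        + (2 * (ρ * μi) / alphaCD K ρ μt μi K) * E μi K)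
    (hrK : ∀ μi : ℝ, 0 < μi →
      r μi K = 2 / (δ μi K * alphaCD K ρ μt μi K) + σ μi K / δ μi K)
    (hrec2 : ∀ μi : ℝ, 0 < μi → ∀ i, 1 ≤ i → i ≤ K - 1 →
      σ μi (K - i) = (2 * (ρ * μi) / alphaCD K ρ μt μi (K - i)) * E μi (K - i + 1)
          + (2 * ((K : ℝ) - i) * μi / alphaCD K ρ μt μi (K - i)) * E μi (K - i - 1)
      ∧ r μi (K - i) = (1 / δ μi (K - i))
          * (2 / alphaCD K ρ μt μi (K - i) + (ρ * μi) * r μi (K - i + 1) + σ μi (K - i))) :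
    Tendsto (fun x => (1 / δ x 0) * (2 / alphaCD K ρ μt x 0 + (ρ * x) * r x 1
        + 2 * (ρ * x) * E x 1 / alphaCD K ρ μt x 0)) atTop
      (𝓝 ((∑ v ∈ range (K + 1), ρ ^ v / v !) * (2 * a)
        / (μt * ∑ v ∈ range K, ρ ^ v / v ! * ((K - v) / K)))) := by
  have hK0 : 0 < K := by omega
  have hpos : ∀ x, 0 < x → ∀ j ≤ K, 0 < δ x j := fun x hx _ => hδ.pos hK0 hρ.le hμt hx
  -- `M₂` continues the `r`-recursion to `j = 0`.
  have hrM := tendsto_mul_delta_of_recursion hρ.ne' (fun j => hδ.tendsto_id_div hK0 hρ hμt)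
    (C := fun _ => 2 * a) (f := fun x j => if j = 0 then _ else r x j)
    ((tendsto_alphaCD_forcing hρ K (hE K le_rfl) (hE (K - 1) (by omega))).congr' <|
      (eventually_gt_atTop 0).mono fun x hx => by
        dsimp only
        rw [if_neg hK0.ne', r_mul_delta_self hδ hpos hsK hrK hx])
    (fun j hj => tendsto_alphaCD_forcing hρ j (hE (j + 1) hj) (hE (j - 1) (by omega)))
    fun j hj => (eventually_gt_atTop 0).mono fun x hx => r_mul_delta_eq hpos hrec2 hx j hj
  rw [← poissonTailRatio_zero_const]
  exact tendsto_div_of_tendsto_mul (by simpa only [↓reduceIte] using hrM 0 K.zero_le)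
    (hδ.tendsto_zero hK0 hρ hμt) (by have := sum_range_mul_sub_div_pos hK0 hρ; positivity)

end CDRecursion

/-- In the SFJ limit `μᵢ → ∞` (with `ρ` fixed), the second moment of the CD
effective server time, `M₂ = E[(Υ̌₀)²]`, converges to `2·ǎ₀²/(η²·μ_t²)`. -/
theorem cd_est_second_moment_limit
    (K : ℕ) (hK : 2 ≤ K) (ρ μt : ℝ) (hρ : 0 < ρ) (hmut : 0 < μt)
    (m n E δ σ r : ℝ → ℕ → ℝ)
    (hmK : ∀ μi : ℝ, 0 < μi → m μi K = 1 / gammaCD K μt μi K)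
    (hmK1 : ∀ μi : ℝ, 0 < μi →
      m μi (K - 1) = (1 + m μi K * (ρ * μi)) / gammaCD K μt μi (K - 1))
    (hnK1 : ∀ μi : ℝ, 0 < μi →
      n μi (K - 1) = ((K : ℝ) - 1) * μi / gammaCD K μt μi (K - 1))
    (hrec : ∀ μi : ℝ, 0 < μi → ∀ i, 2 ≤ i → i ≤ K - 1 →
      m μi (K - i) = (1 + m μi (K - i + 1) * (ρ * μi))
          / (alphaCD K ρ μt μi (K - i) - n μi (K - i + 1) * (ρ * μi))
      ∧ n μi (K - i) = ((K : ℝ) - (i : ℝ)) * μi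
          / (alphaCD K ρ μt μi (K - i) - n μi (K - i + 1) * (ρ * μi)))
    (hE0 : ∀ μi : ℝ, 0 < μi →
      E μi 0 = (1 + m μi 1 * (ρ * μi)) / (ρ * μi + μt - n μi 1 * (ρ * μi)))
    (hEl : ∀ μi : ℝ, 0 < μi → ∀ l, 1 ≤ l → l ≤ K - 1 →
      E μi l = m μi l + n μi l * E μi (l - 1))
    (hEK : ∀ μi : ℝ, 0 < μi → E μi K = m μi K + E μi (K - 1))
    (hdK : ∀ μi : ℝ, 0 < μi → δ μi K = gammaCD K μt μi K)
    (hsK : ∀ μi : ℝ, 0 < μi →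
      σ μi K = (2 * δ μi K / alphaCD K ρ μt μi K) * E μi (K - 1)
        + (2 * (ρ * μi) / alphaCD K ρ μt μi K) * E μi K)
    (hrK : ∀ μi : ℝ, 0 < μi →
      r μi K = 2 / (δ μi K * alphaCD K ρ μt μi K) + σ μi K / δ μi K)
    (hrec2 : ∀ μi : ℝ, 0 < μi → ∀ i, 1 ≤ i → i ≤ K - 1 →
      δ μi (K - i) = (alphaCD K ρ μt μi (K - i) * δ μi (K - i + 1)
          - (ρ * μi) * (((K : ℝ) - i) + 1) * μi) / δ μi (K - i + 1)
      ∧ σ μi (K - i) = (2 * (ρ * μi) / alphaCD K ρ μt μi (K - i)) * E μi (K - i + 1)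
          + (2 * ((K : ℝ) - i) * μi / alphaCD K ρ μt μi (K - i)) * E μi (K - i - 1)
      ∧ r μi (K - i) = (1 / δ μi (K - i))
          * (2 / alphaCD K ρ μt μi (K - i) + (ρ * μi) * r μi (K - i + 1) + σ μi (K - i)))
    (hd0 : ∀ μi : ℝ, 0 < μi →
      δ μi 0 = (alphaCD K ρ μt μi 0 * δ μi 1 - (ρ * μi) * μi) / δ μi 1) :
    Tendsto (fun μi => (1 / δ μi 0)
        * (2 / alphaCD K ρ μt μi 0 + (ρ * μi) * r μi 1
            + 2 * (ρ * μi) * E μi 1 / alphaCD K ρ μt μi 0))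
      atTop
      (nhds (2 * (∑ j ∈ Finset.range (K + 1), ρ ^ j / (Nat.factorial j : ℝ)) ^ 2
        / ((∑ j ∈ Finset.range K, (ρ ^ j / (Nat.factorial j : ℝ)) * (((K : ℝ) - j) / K)) ^ 2
            * μt ^ 2))) := by
  have hδ : IsDeltaRecursion K ρ μt δ :=
    isDeltaRecursion_of_sub_index hdK (fun x hx i hi hiK => (hrec2 x hx i hi hiK).1) hd0
  have hE := tendsto_E hK hρ hmut hδ hmK hmK1 hnK1 hrec hE0 hEl hEK
  convert tendsto_second_moment hK hρ hmut hδ hE hsK hrK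
    (fun x hx i hi hiK => (hrec2 x hx i hi hiK).2) using 2
  have := sum_range_mul_sub_div_pos (by omega : 0 < K) hρ
  set S := ∑ v ∈ range (K + 1), ρ ^ v / (v ! : ℝ)
  set η := ∑ v ∈ range K, ρ ^ v / v ! * ((K - v) / K)
  field_simp
end

section
/- In the setting of the CD effective-server-time recursions (K ≥ 2, ρ > 0, μ_t > 0, λ̃ = ρ·μ_i, with n_i, α_i, γ_i defined as in the first-moment recursion), for每 each 1 ≤ i ≤ K−1 the coefficient n_{K−i} satisfies: μ_i·(1 − n_{K−i}(μ_i)) → μ_t·ω_{K−i} as μ_i → ∞ (with ρ fixed), where ω_{K−i} = (1/K)·Σ_{j=0}^{i−1} (i−j)·ρ^j / ((K−i+j)·(K−i+j−1)···(K−i)). Moreover ω_1·ρ + 1 = η, where η = Σ_{j=0}^{K−1} (ρ^j/j!)·(K−j)/K. -/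
/-! Write `e_i(μ) = μ·(1 − n_{K−i}(μ))`. The recursion for `n_{K−i−1}` rearranges to
`e_{i+1} = (ρ e_i + c) / ((K−i−1) + (ρ e_i + c)/μ)` with `c = (i+1)·μ_t/K`, so when `e_i`
converges, `e_{i+1}` converges to `(ρ·lim e_i + c)/(K−i−1)`. The closed form `μ_t·ω` obeys the
same recurrence, starting from `0` at `i = 0`. The identity for `η` is the sum reindexed by
`j ↦ j + 1`, using `∏_{t<j+1} (1 + t) = (j+1)!`. -/

open Filter

open Finset Topology

lemma alphaCD_sub {K i : ℕ} (h : i ≤ K) (ρ μt μi : ℝ) :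
    alphaCD K ρ μt μi (K - i) = ρ * μi + ((K : ℝ) - i) * μi + (i : ℝ) * μt / K := by
  simp only [alphaCD, Nat.cast_sub h]
  ring

lemma gammaCD_sub {K i : ℕ} (h : i ≤ K) (μt μi : ℝ) :
    gammaCD K μt μi (K - i) = ((K : ℝ) - i) * μi + (i : ℝ) * μt / K := by
  simp only [gammaCD, Nat.cast_sub h]
  ring

/-- `omegaCD K ρ i` is the paper's `ω_{K−i}`. -/
noncomputable def omegaCD (K : ℕ) (ρ : ℝ) (i : ℕ) : ℝ :=
  (1 / (K : ℝ)) * ∑ j ∈ range i, ((i : ℝ) - j) * ρ ^ j / ∏ t ∈ range (j + 1), ((K : ℝ) - i + t)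

lemma omegaCD_zero (K : ℕ) (ρ : ℝ) : omegaCD K ρ 0 = 0 := by
  simp [omegaCD]

lemma prod_range_succ_add_shift (c : ℝ) (j : ℕ) :
    ∏ t ∈ range (j + 2), (c + t) = c * ∏ t ∈ range (j + 1), (c + 1 + t) := by
  rw [prod_range_succ', mul_comm]
  push_cast
  simp only [add_zero, add_assoc, add_comm (1 : ℝ)]

lemma omegaCD_succ {K : ℕ} {i : ℕ} (ρ : ℝ) (h : (K : ℝ) - (i + 1) ≠ 0) :
    omegaCD K ρ (i + 1) = (((i : ℝ) + 1) / K + ρ * omegaCD K ρ i) / ((K : ℝ) - (i + 1)) := by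
  rw [eq_div_iff h, omegaCD, omegaCD, sum_range_succ', mul_add, add_mul, add_comm]
  have hshift : ∀ j : ℕ, ∏ t ∈ range (j + 1 + 1), ((K : ℝ) - (i + 1) + t)
      = ((K : ℝ) - (i + 1)) * ∏ t ∈ range (j + 1), ((K : ℝ) - i + t) := by
    intro j
    rw [prod_range_succ_add_shift]
    exact congrArg _ (prod_congr rfl fun t _ => by ring)
  congr 1
  · simp only [Nat.cast_add, Nat.cast_one, CharP.cast_eq_zero, sub_zero, pow_zero, mul_one,
      zero_add, prod_range_one, add_zero]
    field_simp
  · rw [mul_sum, mul_sum, mul_sum, sum_mul]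
    refine sum_congr rfl fun j _ => ?_
    push_cast
    rw [hshift]
    field_simp
    ring

lemma tendsto_mul_one_sub_div_add {f : ℝ → ℝ} {a m : ℝ} (hm : m ≠ 0)
    (hf : Tendsto f atTop (𝓝 a)) :
    Tendsto (fun μ => μ * (1 - m * μ / (f μ + m * μ))) atTop (𝓝 (a / m)) := by
  have hden : Tendsto (fun μ => f μ / μ + m) atTop (𝓝 m) := by
    simpa using (hf.div_atTop tendsto_id).add_const m
  refine (hf.div (by simpa using hden) hm).congr' ?_
  filter_upwards [eventually_gt_atTop 0, hden.eventually_ne hm] with μ hμ hne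
  have : f μ + m * μ ≠ 0 := by
    contrapose! hne
    field_simp
    linarith
  rw [Pi.div_apply, one_sub_div this, add_sub_cancel_right]
  field_simp

theorem tendsto_mul_one_sub_coefficient (K : ℕ) (ρ μt : ℝ) (n : ℝ → ℕ → ℝ)
    (hnK1 : ∀ μi : ℝ, 0 < μi →
      n μi (K - 1) = ((K : ℝ) - 1) * μi / gammaCD K μt μi (K - 1))
    (hrec : ∀ μi : ℝ, 0 < μi → ∀ i, 2 ≤ i → i ≤ K - 1 →
      n μi (K - i) = ((K : ℝ) - (i : ℝ)) * μi
          / (alphaCD K ρ μt μi (K - i) - n μi (K - i + 1) * (ρ * μi)))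
    (i : ℕ) (hi : 1 ≤ i) (hiK : i ≤ K - 1) :
    Tendsto (fun μi => μi * (1 - n μi (K - i))) atTop (𝓝 (μt * omegaCD K ρ i)) := by
  induction i, hi using Nat.le_induction with
  | base =>
    have hK : (K : ℝ) - 1 ≠ 0 := by
      have : (2 : ℝ) ≤ K := by exact_mod_cast (show 2 ≤ K by omega)
      linarith
    have hω : μt * omegaCD K ρ 1 = μt / K / ((K : ℝ) - 1) := by
      have h1 := omegaCD_succ (K := K) (i := 0) ρ (by simpa using hK)
      simp only [CharP.cast_eq_zero, zero_add, omegaCD_zero, mul_zero, add_zero] at h1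
      rw [h1]
      ring
    rw [hω]
    refine (tendsto_mul_one_sub_div_add hK tendsto_const_nhds).congr' ?_
    filter_upwards [eventually_gt_atTop 0] with μ hμ
    rw [hnK1 μ hμ, gammaCD_sub (by omega)]
    push_cast
    ring
  | succ i hi ih =>
    have hK : (K : ℝ) - (i + 1) ≠ 0 := by
      have : (i : ℝ) + 2 ≤ K := by exact_mod_cast (show i + 2 ≤ K by omega)
      linarith
    have hω : μt * omegaCD K ρ (i + 1)
        = (ρ * (μt * omegaCD K ρ i) + (i + 1) * μt / K) / ((K : ℝ) - (i + 1)) := by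
      rw [omegaCD_succ ρ hK]
      ring
    rw [hω]
    have hf := ((ih (by omega)).const_mul ρ).add_const ((i + 1) * μt / K)
    refine (tendsto_mul_one_sub_div_add hK hf).congr' ?_
    filter_upwards [eventually_gt_atTop 0] with μ hμ
    rw [hrec μ hμ (i + 1) (by omega) hiK, show K - (i + 1) + 1 = K - i by omega,
      alphaCD_sub (by omega)]
    push_cast
    ring

lemma omega_one_mul_add_one_eq_eta (K : ℕ) (hK : 1 ≤ K) (ρ : ℝ) :
    ((1 / (K : ℝ))
          * ∑ j ∈ range (K - 1),
              (((K : ℝ) - 1) - j) * ρ ^ j / ∏ t ∈ range (j + 1), (1 + (t : ℝ))) * ρ + 1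
        = ∑ j ∈ range K, (ρ ^ j / (Nat.factorial j : ℝ)) * (((K : ℝ) - j) / K) := by
  obtain ⟨m, rfl⟩ : ∃ m, K = m + 1 := ⟨K - 1, by omega⟩
  have hfact : ∀ j : ℕ, ∏ t ∈ range j, (1 + (t : ℝ)) = j.factorial := fun j => by
    rw [← prod_range_add_one_eq_factorial]
    push_cast
    simp only [add_comm]
  rw [sum_range_succ', Nat.add_sub_cancel, mul_sum, sum_mul]
  congr 1
  · refine sum_congr rfl fun j _ => ?_
    rw [hfact, Nat.factorial_succ]
    push_cast
    field_simp
    ring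
  · simp only [pow_zero, Nat.factorial_zero, Nat.cast_one, div_one, one_mul, Nat.cast_zero,
      sub_zero]
    field_simp

theorem cd_coefficient_n_limit_general
    (K : ℕ) (hK : 2 ≤ K) (ρ μt : ℝ)
    (n : ℝ → ℕ → ℝ)
    (hnK1 : ∀ μi : ℝ, 0 < μi →
      n μi (K - 1) = ((K : ℝ) - 1) * μi / gammaCD K μt μi (K - 1))
    (hrec : ∀ μi : ℝ, 0 < μi → ∀ i, 2 ≤ i → i ≤ K - 1 →
      n μi (K - i) = ((K : ℝ) - (i : ℝ)) * μi
          / (alphaCD K ρ μt μi (K - i) - n μi (K - i + 1) * (ρ * μi))) :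
    (∀ i, 1 ≤ i → i ≤ K - 1 →
      Tendsto (fun μi => μi * (1 - n μi (K - i))) atTop
        (nhds (μt * ((1 / (K : ℝ))
          * ∑ j ∈ Finset.range i,
              ((i : ℝ) - j) * ρ ^ j / ∏ t ∈ Finset.range (j + 1), ((K : ℝ) - i + t)))))
    ∧ ((1 / (K : ℝ))
          * ∑ j ∈ Finset.range (K - 1),
              (((K : ℝ) - 1) - j) * ρ ^ j / ∏ t ∈ Finset.range (j + 1), (1 + (t : ℝ))) * ρ + 1
        = ∑ j ∈ Finset.range K, (ρ ^ j / (Nat.factorial j : ℝ)) * (((K : ℝ) - j) / K) :=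
  ⟨tendsto_mul_one_sub_coefficient K ρ μt n hnK1 hrec,
    omega_one_mul_add_one_eq_eta K (by omega) ρ⟩

/-- Asymptotics of the coefficients `n_{K−i}`:
`μᵢ·(1 − n_{K−i}(μᵢ)) → μ_t·ω_{K−i}` as `μᵢ → ∞`, and `ω₁·ρ + 1 = η`. -/
theorem cd_coefficient_n_limit
    (K : ℕ) (hK : 2 ≤ K) (ρ μt : ℝ) (hρ : 0 < ρ) (hmut : 0 < μt)
    (n : ℝ → ℕ → ℝ)
    (hnK1 : ∀ μi : ℝ, 0 < μi →
      n μi (K - 1) = ((K : ℝ) - 1) * μi / gammaCD K μt μi (K - 1))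
    (hrec : ∀ μi : ℝ, 0 < μi → ∀ i, 2 ≤ i → i ≤ K - 1 →
      n μi (K - i) = ((K : ℝ) - (i : ℝ)) * μi
          / (alphaCD K ρ μt μi (K - i) - n μi (K - i + 1) * (ρ * μi))) :
    (∀ i, 1 ≤ i → i ≤ K - 1 →
      Tendsto (fun μi => μi * (1 - n μi (K - i))) atTop
        (nhds (μt * ((1 / (K : ℝ))
          * ∑ j ∈ Finset.range i,
              ((i : ℝ) - j) * ρ ^ j / ∏ t ∈ Finset.range (j + 1), ((K : ℝ) - i + t)))))
    ∧ ((1 / (K : ℝ))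
          * ∑ j ∈ Finset.range (K - 1),
              (((K : ℝ) - 1) - j) * ρ ^ j / ∏ t ∈ Finset.range (j + 1), (1 + (t : ℝ))) * ρ + 1
        = ∑ j ∈ Finset.range K, (ρ ^ j / (Nat.factorial j : ℝ)) * (((K : ℝ) - j) / K) :=
  cd_coefficient_n_limit_general K hK ρ μt n hnK1 hrec
end
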